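/- arXiv:math/0312187 — 6 statements merged into one kernel-verified Lean document; each statement's English description precedes it below -/
import Mathlib

section
/- Let F = {X; f_1, ..., f_M; p_1, ..., p_M} be an IFS with probabilities on a compact metric space (X, d), with common Lipschitz constant 0 ≤ l < 1 and measure attractor μ. Fix x_1 ∈ X. Let P be the product probability measure on {1, ..., M}^ℕ under which the coordinates σ_1, σ_2, ... are independent with Pr(σ_j = m) = p_m, and for each sequence σ define the random orbit x_{l+1} = f_{σ_l}(x_l). Then for P-almost every σ the following holds: for every Borel set B ⊆ X with μ(∂B) = 0 (∂B the boundary of B), lim_{l→∞} #{ j ∈ {1, ..., l} : x_j ∈ B } / l = μ(B). -/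
open Metric MeasureTheory Filter Set TopologicalSpace

def ifsOrbit {X : Type*} {M : ℕ} (f : Fin M → X → X) (x₁ : X) (σ : ℕ → Fin M) : ℕ → X :=
  fun k => Nat.rec x₁ (fun n xn => f (σ n) xn) k

namespace IFSaux

variable {X : Type*} {M : ℕ}

lemma orbit_zero (f : Fin M → X → X) (y : X) (σ : ℕ → Fin M) : ifsOrbit f y σ 0 = y := rfl

lemma orbit_succ (f : Fin M → X → X) (y : X) (σ : ℕ → Fin M) (k : ℕ) :
    ifsOrbit f y σ (k + 1) = f (σ k) (ifsOrbit f y σ k) := rfl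

lemma orbit_congr (f : Fin M → X → X) (y : X) {σ τ : ℕ → Fin M} :
    ∀ {k : ℕ}, (∀ i, i < k → σ i = τ i) → ifsOrbit f y σ k = ifsOrbit f y τ k := by
  intro k
  induction k with
  | zero => intro _; rfl
  | succ k ih =>
    intro h
    rw [orbit_succ, orbit_succ, ih (fun i hi => h i (Nat.lt_succ_of_lt hi)),
      h k (Nat.lt_succ_self k)]

/-- Extension of a finite word to an infinite one. -/
def ext (hM : 0 < M) {k : ℕ} (c : Fin k → Fin M) : ℕ → Fin M :=
  fun j => if h : j < k then c ⟨j, h⟩ else ⟨0, hM⟩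

lemma ext_lt (hM : 0 < M) {k : ℕ} (c : Fin k → Fin M) {j : ℕ} (h : j < k) :
    ext hM c j = c ⟨j, h⟩ := dif_pos h

/-- Weight of a finite word. -/
def Wt (p : Fin M → NNReal) {k : ℕ} (c : Fin k → Fin M) : ℝ := ∏ j, (p (c j) : ℝ)

lemma Wt_nonneg (p : Fin M → NNReal) {k : ℕ} (c : Fin k → Fin M) : 0 ≤ Wt p c :=
  Finset.prod_nonneg fun _ _ => (p _).2

lemma Wt_snoc (p : Fin M → NNReal) {k : ℕ} (c : Fin k → Fin M) (m : Fin M) :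
    Wt p (Fin.snoc c m) = Wt p c * (p m : ℝ) := by
  unfold Wt
  rw [Fin.prod_univ_castSucc]
  simp

/-- The transfer operator. -/
def TT (f : Fin M → X → X) (p : Fin M → NNReal) (g : X → ℝ) : X → ℝ :=
  fun x => ∑ m, (p m : ℝ) * g (f m x)

variable {f : Fin M → X → X} {p : Fin M → NNReal}

lemma TT_bound (hp : ∑ m, (p m : ℝ) = 1) {g : X → ℝ} {c : ℝ}
    (hg : ∀ x, |g x| ≤ c) : ∀ x, |TT f p g x| ≤ c := by
  intro x
  calc |TT f p g x| ≤ ∑ m, |(p m : ℝ) * g (f m x)| := Finset.abs_sum_le_sum_abs _ _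
    _ ≤ ∑ m, (p m : ℝ) * c := by
        refine Finset.sum_le_sum fun m _ => ?_
        rw [abs_mul, NNReal.abs_eq]
        exact mul_le_mul_of_nonneg_left (hg _) (p m).2
    _ = c := by rw [← Finset.sum_mul, hp, one_mul]

lemma TT_iter_bound (hp : ∑ m, (p m : ℝ) = 1) {g : X → ℝ} {c : ℝ}
    (hg : ∀ x, |g x| ≤ c) (n : ℕ) : ∀ x, |(TT f p)^[n] g x| ≤ c := by
  induction n with
  | zero => exact hg
  | succ n ih =>
    rw [Function.iterate_succ_apply']
    exact TT_bound hp ih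

lemma TT_mul_left (a : ℝ) (h : X → ℝ) :
    TT f p (fun w => a * h w) = fun w => a * TT f p h w := by
  funext x
  unfold TT
  rw [Finset.mul_sum]
  refine Finset.sum_congr rfl fun m _ => by ring

lemma TT_iter_mul_left (a : ℝ) (h : X → ℝ) (n : ℕ) :
    (TT f p)^[n] (fun w => a * h w) = fun w => a * (TT f p)^[n] h w := by
  induction n generalizing h with
  | zero => rfl
  | succ n ih =>
    rw [Function.iterate_succ_apply, TT_mul_left, ih, Function.iterate_succ_apply]

lemma TT_sub_const (hp : ∑ m, (p m : ℝ) = 1) (a : ℝ) (h : X → ℝ) :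
    TT f p (fun w => h w - a) = fun w => TT f p h w - a := by
  funext x
  unfold TT
  have h1 : ∀ m : Fin M, (p m : ℝ) * (h (f m x) - a) = (p m : ℝ) * h (f m x) - (p m : ℝ) * a :=
    fun m => by ring
  rw [Finset.sum_congr rfl fun m _ => h1 m, Finset.sum_sub_distrib, ← Finset.sum_mul, hp, one_mul]

lemma TT_iter_sub_const (hp : ∑ m, (p m : ℝ) = 1) (a : ℝ) (h : X → ℝ) (n : ℕ) :
    (TT f p)^[n] (fun w => h w - a) = fun w => (TT f p)^[n] h w - a := by
  induction n generalizing h with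
  | zero => rfl
  | succ n ih =>
    rw [Function.iterate_succ_apply, TT_sub_const hp, ih, Function.iterate_succ_apply]

lemma TT_const (hp : ∑ m, (p m : ℝ) = 1) (a : ℝ) :
    TT f p (fun _ => a) = fun _ => a := by
  funext x; unfold TT; rw [← Finset.sum_mul, hp, one_mul]

lemma TT_iter_const (hp : ∑ m, (p m : ℝ) = 1) (a : ℝ) (n : ℕ) :
    (TT f p)^[n] (fun _ => a) = fun _ => a := by
  induction n with
  | zero => rfl
  | succ n ih => rw [Function.iterate_succ_apply, TT_const hp, ih]



section Lip
variable [MetricSpace X]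

lemma TT_lip (hp : ∑ m, (p m : ℝ) = 1) {l : NNReal} (hf : ∀ m, LipschitzWith l (f m))
    {K : ℝ} {g : X → ℝ} (hK : 0 ≤ K) (hg : ∀ x y, |g x - g y| ≤ K * dist x y) :
    ∀ x y, |TT f p g x - TT f p g y| ≤ (K * l) * dist x y := by
  intro x y
  have h1 : TT f p g x - TT f p g y = ∑ m, (p m : ℝ) * (g (f m x) - g (f m y)) := by
    unfold TT
    rw [← Finset.sum_sub_distrib]
    exact Finset.sum_congr rfl fun m _ => by ring
  rw [h1]
  calc |∑ m, (p m : ℝ) * (g (f m x) - g (f m y))|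
      ≤ ∑ m, |(p m : ℝ) * (g (f m x) - g (f m y))| := Finset.abs_sum_le_sum_abs _ _
    _ ≤ ∑ m, (p m : ℝ) * ((K * l) * dist x y) := by
        refine Finset.sum_le_sum fun m _ => ?_
        rw [abs_mul, NNReal.abs_eq]
        refine mul_le_mul_of_nonneg_left ?_ (p m).2
        calc |g (f m x) - g (f m y)| ≤ K * dist (f m x) (f m y) := hg _ _
          _ ≤ K * ((l : ℝ) * dist x y) :=
              mul_le_mul_of_nonneg_left ((hf m).dist_le_mul x y) hK
          _ = (K * l) * dist x y := by ring
    _ = (K * l) * dist x y := by rw [← Finset.sum_mul, hp, one_mul]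

lemma TT_iter_lip (hp : ∑ m, (p m : ℝ) = 1) {l : NNReal} (hf : ∀ m, LipschitzWith l (f m))
    {K : ℝ} {g : X → ℝ} (hK : 0 ≤ K) (hg : ∀ x y, |g x - g y| ≤ K * dist x y) (n : ℕ) :
    ∀ x y, |(TT f p)^[n] g x - (TT f p)^[n] g y| ≤ (K * (l : ℝ) ^ n) * dist x y := by
  induction n with
  | zero => simpa using hg
  | succ n ih =>
    intro x y
    rw [Function.iterate_succ_apply']
    have h2 : 0 ≤ K * (l : ℝ) ^ n := mul_nonneg hK (pow_nonneg l.2 n)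
    have := TT_lip hp hf h2 ih x y
    calc |TT f p ((TT f p)^[n] g) x - TT f p ((TT f p)^[n] g) y|
        ≤ (K * (l : ℝ) ^ n * (l : ℝ)) * dist x y := this
      _ = (K * (l : ℝ) ^ (n + 1)) * dist x y := by ring

end Lip

/-- Splitting bijection for the last letter of a word. -/
def snocEquiv (M k : ℕ) : ((Fin k → Fin M) × Fin M) ≃ (Fin (k + 1) → Fin M) where
  toFun x := Fin.snoc x.1 x.2
  invFun c := (Fin.init c, c (Fin.last k))
  left_inv := by rintro ⟨a, m⟩; simp
  right_inv := by intro c; simp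

lemma sum_snoc {k : ℕ} (φ : (Fin (k + 1) → Fin M) → ℝ) :
    ∑ c : Fin (k + 1) → Fin M, φ c
      = ∑ a : Fin k → Fin M, ∑ m : Fin M, φ (Fin.snoc a m) := by
  rw [← Equiv.sum_comp (snocEquiv M k) φ, Fintype.sum_prod_type]
  rfl

lemma orbit_ext_snoc (hM : 0 < M) (f : Fin M → X → X) (y : X) {k : ℕ}
    (c : Fin k → Fin M) (m : Fin M) {j : ℕ} (hj : j ≤ k) :
    ifsOrbit f y (ext hM (Fin.snoc c m)) j = ifsOrbit f y (ext hM c) j := by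
  refine orbit_congr f y fun i hi => ?_
  have hik : i < k := lt_of_lt_of_le hi hj
  rw [ext_lt hM _ (Nat.lt_succ_of_lt hik), ext_lt hM _ hik]
  have h2 : (⟨i, Nat.lt_succ_of_lt hik⟩ : Fin (k + 1)) = Fin.castSucc ⟨i, hik⟩ := rfl
  rw [h2, Fin.snoc_castSucc]

lemma orbit_ext_snoc_top (hM : 0 < M) (f : Fin M → X → X) (y : X) {k : ℕ}
    (c : Fin k → Fin M) (m : Fin M) :
    ifsOrbit f y (ext hM (Fin.snoc c m)) (k + 1) = f m (ifsOrbit f y (ext hM c) k) := by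
  rw [orbit_succ, ext_lt hM _ (Nat.lt_succ_self k)]
  have h2 : (⟨k, Nat.lt_succ_self k⟩ : Fin (k + 1)) = Fin.last k := rfl
  rw [h2, Fin.snoc_last, orbit_ext_snoc hM f y c m le_rfl]

lemma E1 (hM : 0 < M) (hp : ∑ m, (p m : ℝ) = 1) :
    ∀ (k : ℕ) (g : X → ℝ) (y : X),
    ∑ c : Fin k → Fin M, Wt p c * g (ifsOrbit f y (ext hM c) k) = (TT f p)^[k] g y := by
  intro k
  induction k with
  | zero =>
    intro g y
    rw [Finset.univ_unique, Finset.sum_singleton]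
    simp [Wt, orbit_zero]
  | succ k ih =>
    intro g y
    rw [sum_snoc]
    have h1 : ∀ (a : Fin k → Fin M),
        ∑ m : Fin M, Wt p (Fin.snoc a m) * g (ifsOrbit f y (ext hM (Fin.snoc a m)) (k + 1))
          = Wt p a * TT f p g (ifsOrbit f y (ext hM a) k) := by
      intro a
      unfold TT
      rw [Finset.mul_sum]
      refine Finset.sum_congr rfl fun m _ => ?_
      rw [Wt_snoc, orbit_ext_snoc_top hM f y a m]
      ring
    rw [Finset.sum_congr rfl fun a _ => h1 a, ih (TT f p g) y, ← Function.iterate_succ_apply]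

/-- Truncation of a word. -/
def trunc (k m : ℕ) (c : Fin (k + m) → Fin M) : Fin k → Fin M :=
  fun j => c (Fin.castLE (Nat.le_add_right k m) j)

lemma ext_trunc (hM : 0 < M) {k m : ℕ} (c : Fin (k + m) → Fin M) {i : ℕ} (hi : i < k) :
    ext hM (trunc k m c) i = ext hM c i := by
  rw [ext_lt hM _ hi, ext_lt hM _ (lt_of_lt_of_le hi (Nat.le_add_right k m))]
  rfl

lemma orbit_ext_trunc (hM : 0 < M) (f : Fin M → X → X) (y : X) {k m : ℕ}
    (c : Fin (k + m) → Fin M) {j : ℕ} (hj : j ≤ k) :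
    ifsOrbit f y (ext hM (trunc k m c)) j = ifsOrbit f y (ext hM c) j :=
  orbit_congr f y fun i hi => ext_trunc hM c (lt_of_lt_of_le hi hj)

lemma PAD (hp : ∑ m, (p m : ℝ) = 1) :
    ∀ (m k : ℕ) (h : (Fin k → Fin M) → ℝ),
    ∑ c : Fin (k + m) → Fin M, Wt p c * h (trunc k m c)
      = ∑ a : Fin k → Fin M, Wt p a * h a := by
  intro m
  induction m with
  | zero =>
    intro k h
    refine Finset.sum_congr rfl fun c _ => ?_
    have : trunc k 0 c = c := funext fun j => congrArg c rfl
    rw [this]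
  | succ m ih =>
    intro k h
    show ∑ c : Fin ((k + m) + 1) → Fin M, Wt p c * h (trunc k (m + 1) c)
      = ∑ a : Fin k → Fin M, Wt p a * h a
    rw [sum_snoc]
    have h1 : ∀ (a : Fin (k + m) → Fin M),
        ∑ mm : Fin M, Wt p (Fin.snoc a mm) * h (trunc k (m + 1) (Fin.snoc a mm))
          = Wt p a * h (trunc k m a) := by
      intro a
      have h2 : ∀ mm : Fin M, trunc k (m + 1) (Fin.snoc a mm) = trunc k m a := by
        intro mm
        funext j
        have h4 : trunc k (m + 1) (Fin.snoc a mm) j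
            = Fin.snoc (α := fun _ : Fin (k + m + 1) => Fin M) a mm
                (Fin.castSucc (Fin.castLE (Nat.le_add_right k m) j)) := by
          unfold trunc
          congr 1
        exact h4.trans (Fin.snoc_castSucc (α := fun _ : Fin (k + m + 1) => Fin M) mm a
          (Fin.castLE (Nat.le_add_right k m) j))
      calc ∑ mm : Fin M, Wt p (Fin.snoc a mm) * h (trunc k (m + 1) (Fin.snoc a mm))
          = ∑ mm : Fin M, (p mm : ℝ) * (Wt p a * h (trunc k m a)) := by
            refine Finset.sum_congr rfl fun mm _ => ?_
            rw [h2 mm, Wt_snoc]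
            ring
        _ = Wt p a * h (trunc k m a) := by rw [← Finset.sum_mul, hp, one_mul]
    rw [Finset.sum_congr rfl fun a _ => h1 a, ih k h]

lemma EV1 (hM : 0 < M) (hp : ∑ m, (p m : ℝ) = 1) {k L : ℕ} (hkL : k ≤ L)
    (g : X → ℝ) (y : X) :
    ∑ c : Fin L → Fin M, Wt p c * g (ifsOrbit f y (ext hM c) k) = (TT f p)^[k] g y := by
  obtain ⟨m, rfl⟩ := Nat.exists_eq_add_of_le hkL
  rw [← E1 hM hp k g y, ← PAD hp m k (fun a => g (ifsOrbit f y (ext hM a) k))]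
  exact Finset.sum_congr rfl fun c _ => by
    rw [orbit_ext_trunc hM f y c le_rfl]

lemma E2 (hM : 0 < M) (hp : ∑ m, (p m : ℝ) = 1) :
    ∀ (n k : ℕ) (G : X → X → ℝ) (y : X),
    ∑ c : Fin (k + n) → Fin M,
        Wt p c * G (ifsOrbit f y (ext hM c) k) (ifsOrbit f y (ext hM c) (k + n))
      = (TT f p)^[k] (fun z => (TT f p)^[n] (G z) z) y := by
  intro n
  induction n with
  | zero =>
    intro k G y
    exact E1 hM hp k (fun z => G z z) y
  | succ n ih =>
    intro k G y
    show ∑ c : Fin ((k + n) + 1) → Fin M,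
        Wt p c * G (ifsOrbit f y (ext hM c) k) (ifsOrbit f y (ext hM c) ((k + n) + 1))
      = (TT f p)^[k] (fun z => (TT f p)^[n + 1] (G z) z) y
    rw [sum_snoc]
    have h1 : ∀ (a : Fin (k + n) → Fin M),
        ∑ mm : Fin M, Wt p (Fin.snoc a mm) *
            G (ifsOrbit f y (ext hM (Fin.snoc a mm)) k)
              (ifsOrbit f y (ext hM (Fin.snoc a mm)) (k + n + 1))
          = Wt p a * (fun z => TT f p (G z)) (ifsOrbit f y (ext hM a) k)
              (ifsOrbit f y (ext hM a) (k + n)) := by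
      intro a
      show _ = Wt p a * TT f p (G (ifsOrbit f y (ext hM a) k)) (ifsOrbit f y (ext hM a) (k + n))
      unfold TT
      rw [Finset.mul_sum]
      refine Finset.sum_congr rfl fun mm _ => ?_
      rw [Wt_snoc, orbit_ext_snoc hM f y a mm (Nat.le_add_right k n),
        orbit_ext_snoc_top hM f y a mm]
      ring
    rw [Finset.sum_congr rfl fun a _ => h1 a,
      ih k (fun z w => TT f p (G z) w) y]
    refine congrFun (congrArg _ ?_) y
    funext z
    rw [← Function.iterate_succ_apply]

lemma EV2 (hM : 0 < M) (hp : ∑ m, (p m : ℝ) = 1) {k n L : ℕ} (hL : k + n ≤ L)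
    (G : X → X → ℝ) (y : X) :
    ∑ c : Fin L → Fin M,
        Wt p c * G (ifsOrbit f y (ext hM c) k) (ifsOrbit f y (ext hM c) (k + n))
      = (TT f p)^[k] (fun z => (TT f p)^[n] (G z) z) y := by
  obtain ⟨m, rfl⟩ := Nat.exists_eq_add_of_le hL
  rw [← E2 hM hp n k G y,
    ← PAD hp m (k + n)
      (fun a => G (ifsOrbit f y (ext hM a) k) (ifsOrbit f y (ext hM a) (k + n)))]
  exact Finset.sum_congr rfl fun c _ => by
    rw [orbit_ext_trunc hM f y c (Nat.le_add_right k n), orbit_ext_trunc hM f y c le_rfl]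

lemma Wt_sum_one (hp : ∑ m, (p m : ℝ) = 1) (k : ℕ) :
    ∑ c : Fin k → Fin M, Wt p c = 1 := by
  induction k with
  | zero => rw [Finset.univ_unique, Finset.sum_singleton]; simp [Wt]
  | succ k ih =>
    rw [sum_snoc]
    have h1 : ∀ a : Fin k → Fin M, ∑ m : Fin M, Wt p (Fin.snoc a m) = Wt p a := by
      intro a
      calc ∑ m : Fin M, Wt p (Fin.snoc a m) = ∑ m : Fin M, Wt p a * (p m : ℝ) :=
            Finset.sum_congr rfl fun m _ => Wt_snoc p a m
        _ = Wt p a := by rw [← Finset.mul_sum, hp, mul_one]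
    rw [Finset.sum_congr rfl fun a _ => h1 a, ih]

section Prob

lemma cyl_measurable {k : ℕ} (c : Fin k → Fin M) :
    MeasurableSet {σ : ℕ → Fin M | ∀ j : Fin k, σ (j : ℕ) = c j} := by
  have h1 : {σ : ℕ → Fin M | ∀ j : Fin k, σ (j : ℕ) = c j}
      = ⋂ j : Fin k, (fun σ : ℕ → Fin M => σ (j : ℕ)) ⁻¹' {c j} := by
    ext σ; simp [Set.mem_iInter]
  rw [h1]
  exact MeasurableSet.iInter fun j =>
    (measurable_pi_apply (j : ℕ)) (measurableSet_singleton (c j))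

variable (P : Measure (ℕ → Fin M))

lemma P_cyl (hM : 0 < M)
    (hPiid : ∀ (k : ℕ) (c : ℕ → Fin M),
      P {σ | ∀ j, j < k → σ j = c j} = ∏ j ∈ Finset.range k, (p (c j) : ENNReal))
    {k : ℕ} (c : Fin k → Fin M) :
    P {σ | ∀ j : Fin k, σ (j : ℕ) = c j} = ∏ j : Fin k, (p (c j) : ENNReal) := by
  have h1 : {σ : ℕ → Fin M | ∀ j : Fin k, σ (j : ℕ) = c j}
      = {σ | ∀ j, j < k → σ j = ext hM c j} := by
    ext σ
    simp only [Set.mem_setOf_eq]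
    constructor
    · intro h j hj
      rw [ext_lt hM c hj]
      exact h ⟨j, hj⟩
    · intro h j
      rw [h (j : ℕ) j.2, ext_lt hM c j.2]
  rw [h1, hPiid k (ext hM c),
    ← Fin.prod_univ_eq_prod_range (fun j => (p (ext hM c j) : ENNReal)) k]
  refine Finset.prod_congr rfl fun j _ => ?_
  rw [ext_lt hM c j.2]

lemma P_event (hM : 0 < M)
    (hPiid : ∀ (k : ℕ) (c : ℕ → Fin M),
      P {σ | ∀ j, j < k → σ j = c j} = ∏ j ∈ Finset.range k, (p (c j) : ENNReal))
    {k : ℕ} (S : Finset (Fin k → Fin M)) :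
    P {σ | (fun j : Fin k => σ (j : ℕ)) ∈ S} = ∑ c ∈ S, ∏ j, (p (c j) : ENNReal) := by
  have h1 : {σ : ℕ → Fin M | (fun j : Fin k => σ (j : ℕ)) ∈ S}
      = ⋃ c ∈ S, {σ : ℕ → Fin M | ∀ j : Fin k, σ (j : ℕ) = c j} := by
    ext σ
    simp only [Set.mem_iUnion, Set.mem_setOf_eq]
    constructor
    · intro h
      exact ⟨_, h, fun j => rfl⟩
    · rintro ⟨c, hc, h⟩
      have h2 : (fun j : Fin k => σ (j : ℕ)) = c := funext h
      rw [h2]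
      exact hc
  rw [h1, measure_biUnion_finset ?_ fun c _ => cyl_measurable c]
  · exact Finset.sum_congr rfl fun c hc => P_cyl P hM hPiid c
  · intro c hc c' hc' hne
    rw [Function.onFun, Set.disjoint_left]
    intro σ h h'
    exact hne (funext fun j => (h j).symm.trans (h' j))

lemma Wt_coe {k : ℕ} (c : Fin k → Fin M) :
    (∏ j, (p (c j) : ENNReal)) = ENNReal.ofReal (Wt p c) := by
  rw [← ENNReal.coe_finset_prod,
    show Wt p c = ((∏ j, p (c j) : NNReal) : ℝ) by rw [Wt]; push_cast; rfl,
    ENNReal.ofReal_coe_nnreal]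

lemma cheb (hM : 0 < M) (hp : ∑ m, (p m : ℝ) = 1)
    (hPiid : ∀ (k : ℕ) (c : ℕ → Fin M),
      P {σ | ∀ j, j < k → σ j = c j} = ∏ j ∈ Finset.range k, (p (c j) : ENNReal))
    {k : ℕ} (Z : (ℕ → Fin M) → ℝ)
    (hZ : ∀ σ, Z σ = Z (ext hM (fun j : Fin k => σ (j : ℕ)))) {ε : ℝ} (hε : 0 < ε) :
    P {σ | ε ≤ |Z σ|}
      ≤ ENNReal.ofReal ((∑ c : Fin k → Fin M, Wt p c * (Z (ext hM c)) ^ 2) / ε ^ 2) := by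
  classical
  set S : Finset (Fin k → Fin M) := Finset.univ.filter (fun c => ε ≤ |Z (ext hM c)|) with hS
  have h1 : {σ : ℕ → Fin M | ε ≤ |Z σ|} = {σ | (fun j : Fin k => σ (j : ℕ)) ∈ S} := by
    ext σ
    simp only [hS, Finset.mem_filter, Finset.mem_univ, true_and, Set.mem_setOf_eq]
    rw [← hZ σ]
  rw [h1, P_event P hM hPiid S]
  calc ∑ c ∈ S, ∏ j, (p (c j) : ENNReal)
      = ∑ c ∈ S, ENNReal.ofReal (Wt p c) :=
        Finset.sum_congr rfl fun c _ => Wt_coe c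
    _ = ENNReal.ofReal (∑ c ∈ S, Wt p c) :=
        (ENNReal.ofReal_sum_of_nonneg fun c _ => Wt_nonneg p c).symm
    _ ≤ _ := by
        refine ENNReal.ofReal_le_ofReal ?_
        have hε2 : 0 < ε ^ 2 := pow_pos hε 2
        calc ∑ c ∈ S, Wt p c
            ≤ ∑ c ∈ S, Wt p c * (Z (ext hM c)) ^ 2 / ε ^ 2 := by
              refine Finset.sum_le_sum fun c hc => ?_
              have h3 : ε ≤ |Z (ext hM c)| := (Finset.mem_filter.mp hc).2
              have h4 : ε ^ 2 ≤ (Z (ext hM c)) ^ 2 := by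
                have h5 := pow_le_pow_left₀ hε.le h3 2
                rwa [sq_abs] at h5
              rw [mul_div_assoc]
              exact le_mul_of_one_le_right (Wt_nonneg p c) ((one_le_div hε2).mpr h4)
          _ ≤ ∑ c : Fin k → Fin M, Wt p c * (Z (ext hM c)) ^ 2 / ε ^ 2 := by
              refine Finset.sum_le_sum_of_subset_of_nonneg (Finset.subset_univ S)
                fun c _ _ => ?_
              exact div_nonneg (mul_nonneg (Wt_nonneg p c) (sq_nonneg _)) hε2.le
          _ = (∑ c : Fin k → Fin M, Wt p c * (Z (ext hM c)) ^ 2) / ε ^ 2 :=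
              (Finset.sum_div _ _ _).symm

end Prob

section Mu

variable [MetricSpace X] [CompactSpace X] [Nonempty X] [MeasurableSpace X] [BorelSpace X]

lemma lipR_continuous {K : ℝ} {g : X → ℝ} (hg : ∀ x y, |g x - g y| ≤ K * dist x y) :
    Continuous g := by
  have h1 : LipschitzWith (Real.toNNReal K) g := by
    rw [lipschitzWith_iff_dist_le_mul]
    intro x y
    rw [Real.dist_eq]
    exact (hg x y).trans (mul_le_mul_of_nonneg_right (Real.le_coe_toNNReal K) dist_nonneg)
  exact h1.continuous

lemma cont_integrable {g : X → ℝ} (hg : Continuous g) (ν : Measure X) [IsFiniteMeasure ν] :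
    Integrable g ν :=
  hg.integrable_of_hasCompactSupport (HasCompactSupport.of_compactSpace g)

lemma TT_continuous {l : NNReal} (hf : ∀ m, LipschitzWith l (f m)) {g : X → ℝ}
    (hg : Continuous g) : Continuous (TT f p g) := by
  exact continuous_finset_sum _ fun m _ => continuous_const.mul (hg.comp (hf m).continuous)

lemma TT_iter_continuous {l : NNReal} (hf : ∀ m, LipschitzWith l (f m)) {g : X → ℝ}
    (hg : Continuous g) (n : ℕ) : Continuous ((TT f p)^[n] g) := by
  induction n with
  | zero => exact hg
  | succ n ih =>
    rw [Function.iterate_succ_apply']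
    exact TT_continuous hf ih

lemma integral_TT {l : NNReal} (hf : ∀ m, LipschitzWith l (f m))
    (μ : Measure X) (hμ : IsProbabilityMeasure μ)
    (hμinv : (∑ m, (p m : ENNReal) • μ.map (f m)) = μ)
    {g : X → ℝ} (hg : Continuous g) : ∫ x, TT f p g x ∂μ = ∫ x, g x ∂μ := by
  have hint : ∀ m : Fin M, Integrable (fun x => g (f m x)) μ := fun m =>
    cont_integrable (hg.comp (hf m).continuous) μ
  have hL : ∫ x, TT f p g x ∂μ = ∑ m, (p m : ℝ) * ∫ x, g (f m x) ∂μ := by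
    rw [show (fun x => TT f p g x) = fun x => ∑ m, (p m : ℝ) * g (f m x) from rfl,
      integral_finset_sum _ fun m _ => (hint m).const_mul _]
    exact Finset.sum_congr rfl fun m _ => integral_const_mul _ _
  have hR : ∫ x, g x ∂μ = ∑ m, (p m : ℝ) * ∫ x, g (f m x) ∂μ := by
    conv_lhs => rw [← hμinv]
    have hmeas : ∀ m : Fin M, AEMeasurable (f m) μ :=
      fun m => (hf m).continuous.measurable.aemeasurable
    have hmap : ∀ m : Fin M, IsProbabilityMeasure (μ.map (f m)) :=
      fun m => Measure.isProbabilityMeasure_map (hmeas m)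
    have hintm : ∀ m ∈ Finset.univ,
        Integrable g ((p m : ENNReal) • μ.map (f m)) := by
      intro m _
      haveI := hmap m
      exact (cont_integrable hg (μ.map (f m))).smul_measure ENNReal.coe_ne_top
    rw [integral_finset_sum_measure hintm]
    refine Finset.sum_congr rfl fun m _ => ?_
    rw [integral_smul_measure, ENNReal.coe_toReal, smul_eq_mul,
      integral_map (hmeas m) hg.aestronglyMeasurable]
  rw [hL, hR]

lemma integral_TT_iter {l : NNReal} (hf : ∀ m, LipschitzWith l (f m))
    (μ : Measure X) (hμ : IsProbabilityMeasure μ)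
    (hμinv : (∑ m, (p m : ENNReal) • μ.map (f m)) = μ)
    {g : X → ℝ} (hg : Continuous g) (n : ℕ) :
    ∫ x, (TT f p)^[n] g x ∂μ = ∫ x, g x ∂μ := by
  induction n with
  | zero => rfl
  | succ n ih =>
    rw [Function.iterate_succ_apply', integral_TT hf μ hμ hμinv (TT_iter_continuous hf hg n),
      ih]

lemma centered_bound (hp : ∑ m, (p m : ℝ) = 1) {l : NNReal}
    (hf : ∀ m, LipschitzWith l (f m))
    (μ : Measure X) (hμ : IsProbabilityMeasure μ)
    (hμinv : (∑ m, (p m : ENNReal) • μ.map (f m)) = μ)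
    {g : X → ℝ} {K : ℝ} (hK : 0 ≤ K) (hg : ∀ x y, |g x - g y| ≤ K * dist x y) (n : ℕ) :
    ∀ x, |(TT f p)^[n] (fun w => g w - ∫ z, g z ∂μ) x|
      ≤ K * diam (Set.univ : Set X) * (l : ℝ) ^ n := by
  intro x
  haveI := hμ
  have hgc : Continuous g := lipR_continuous hg
  have hitc : Continuous ((TT f p)^[n] g) := TT_iter_continuous hf hgc n
  rw [TT_iter_sub_const hp]
  show |(TT f p)^[n] g x - ∫ z, g z ∂μ| ≤ K * diam (Set.univ : Set X) * (l : ℝ) ^ n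
  have h1 : (∫ z, ((TT f p)^[n] g x - (TT f p)^[n] g z) ∂μ)
      = (TT f p)^[n] g x - ∫ z, g z ∂μ := by
    rw [integral_sub (integrable_const _) (cont_integrable hitc μ), integral_const,
      probReal_univ, one_smul, integral_TT_iter hf μ hμ hμinv hgc n]
  rw [← h1]
  have h2 : ∀ᵐ z ∂μ, ‖(TT f p)^[n] g x - (TT f p)^[n] g z‖
      ≤ K * diam (Set.univ : Set X) * (l : ℝ) ^ n := by
    refine Filter.Eventually.of_forall fun z => ?_
    have h3 := TT_iter_lip hp hf hK hg n x z
    have h4 : dist x z ≤ diam (Set.univ : Set X) :=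
      dist_le_diam_of_mem isCompact_univ.isBounded (Set.mem_univ x) (Set.mem_univ z)
    calc ‖(TT f p)^[n] g x - (TT f p)^[n] g z‖ ≤ (K * (l : ℝ) ^ n) * dist x z := h3
      _ ≤ (K * (l : ℝ) ^ n) * diam (Set.univ : Set X) := by
          refine mul_le_mul_of_nonneg_left h4 ?_
          exact mul_nonneg hK (pow_nonneg l.2 n)
      _ = K * diam (Set.univ : Set X) * (l : ℝ) ^ n := by ring
  calc |∫ z, ((TT f p)^[n] g x - (TT f p)^[n] g z) ∂μ|
      ≤ K * diam (Set.univ : Set X) * (l : ℝ) ^ n * (μ Set.univ).toReal :=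
        norm_integral_le_of_norm_le_const h2
    _ = K * diam (Set.univ : Set X) * (l : ℝ) ^ n := by
        rw [measure_univ, ENNReal.toReal_one, mul_one]

end Mu

section RealAux

lemma geom_le {r : ℝ} (h0 : 0 ≤ r) (h1 : r < 1) (n : ℕ) :
    ∑ i ∈ Finset.range n, r ^ i ≤ 1 / (1 - r) := by
  have hpos : 0 < 1 - r := by linarith
  rw [geom_sum_eq (ne_of_lt h1) n,
    show (r ^ n - 1) / (r - 1) = (1 - r ^ n) / (1 - r) by
      rw [← neg_sub (r ^ n), ← neg_sub r, neg_div_neg_eq]]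
  have hrn : 0 ≤ r ^ n := pow_nonneg h0 n
  rw [div_le_div_iff₀ hpos hpos]
  nlinarith

lemma row_bound {r : ℝ} (h0 : 0 ≤ r) (h1 : r < 1) (L i : ℕ) :
    ∑ j ∈ Finset.range L, r ^ (Nat.dist i j) ≤ 2 / (1 - r) := by
  classical
  have hpos : 0 < 1 - r := by linarith
  rw [← Finset.sum_filter_add_sum_filter_not (Finset.range L) (fun j => j < i)]
  have hA : ∑ j ∈ (Finset.range L).filter (fun j => j < i), r ^ (Nat.dist i j)
      ≤ 1 / (1 - r) := by
    have e1 : ∑ j ∈ (Finset.range L).filter (fun j => j < i), r ^ (Nat.dist i j)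
        = ∑ j ∈ (Finset.range L).filter (fun j => j < i), r ^ (i - j) := by
      refine Finset.sum_congr rfl fun j hj => ?_
      have hji : j ≤ i := (Finset.mem_filter.mp hj).2.le
      rw [Nat.dist_comm, Nat.dist_eq_sub_of_le hji]
    rw [e1]
    calc ∑ j ∈ (Finset.range L).filter (fun j => j < i), r ^ (i - j)
        ≤ ∑ j ∈ Finset.range i, r ^ (i - j) := by
          refine Finset.sum_le_sum_of_subset_of_nonneg ?_ fun j _ _ => pow_nonneg h0 _
          intro j hj
          exact Finset.mem_range.mpr (Finset.mem_filter.mp hj).2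
      _ = ∑ j ∈ Finset.range i, r ^ (j + 1) := by
          rw [← Finset.sum_range_reflect (fun j => r ^ (j + 1)) i]
          refine Finset.sum_congr rfl fun j hj => ?_
          have hj' : j < i := Finset.mem_range.mp hj
          have : i - 1 - j + 1 = i - j := by omega
          rw [this]
      _ ≤ ∑ j ∈ Finset.range i, r ^ j :=
          Finset.sum_le_sum fun j _ => pow_le_pow_of_le_one h0 h1.le (Nat.le_succ j)
      _ ≤ 1 / (1 - r) := geom_le h0 h1 i
  have hB : ∑ j ∈ (Finset.range L).filter (fun j => ¬ j < i), r ^ (Nat.dist i j)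
      ≤ 1 / (1 - r) := by
    have e1 : ∑ j ∈ (Finset.range L).filter (fun j => ¬ j < i), r ^ (Nat.dist i j)
        = ∑ j ∈ (Finset.range L).filter (fun j => ¬ j < i), r ^ (j - i) := by
      refine Finset.sum_congr rfl fun j hj => ?_
      have hij : i ≤ j := Nat.le_of_not_lt (Finset.mem_filter.mp hj).2
      rw [Nat.dist_eq_sub_of_le hij]
    rw [e1]
    calc ∑ j ∈ (Finset.range L).filter (fun j => ¬ j < i), r ^ (j - i)
        ≤ ∑ j ∈ Finset.Ico i (i + L), r ^ (j - i) := by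
          refine Finset.sum_le_sum_of_subset_of_nonneg ?_ fun j _ _ => pow_nonneg h0 _
          intro j hj
          have h2 := Finset.mem_filter.mp hj
          exact Finset.mem_Ico.mpr ⟨Nat.le_of_not_lt h2.2,
            lt_of_lt_of_le (Finset.mem_range.mp h2.1) (Nat.le_add_left L i)⟩
      _ = ∑ j ∈ Finset.range L, r ^ j := by
          rw [Finset.sum_Ico_eq_sum_range]
          simp
      _ ≤ 1 / (1 - r) := geom_le h0 h1 L
  calc _ ≤ 1 / (1 - r) + 1 / (1 - r) := add_le_add hA hB
    _ = 2 / (1 - r) := by ring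

lemma grid_bound {r : ℝ} (h0 : 0 ≤ r) (h1 : r < 1) (L : ℕ) :
    ∑ i ∈ Finset.range L, ∑ j ∈ Finset.range L, r ^ (Nat.dist i j)
      ≤ 2 * L / (1 - r) := by
  calc ∑ i ∈ Finset.range L, ∑ j ∈ Finset.range L, r ^ (Nat.dist i j)
      ≤ ∑ _i ∈ Finset.range L, 2 / (1 - r) :=
        Finset.sum_le_sum fun i _ => row_bound h0 h1 L i
    _ = L * (2 / (1 - r)) := by rw [Finset.sum_const, Finset.card_range, nsmul_eq_mul]
    _ = 2 * L / (1 - r) := by ring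

lemma sqrt_tendsto_atTop : Tendsto Nat.sqrt atTop atTop := by
  refine tendsto_atTop_atTop.mpr fun b => ⟨b * b, fun n hn => ?_⟩
  exact Nat.le_sqrt.mpr hn

lemma ratio_tendsto_zero {C : ℝ} (hC : 0 ≤ C) :
    Tendsto (fun k : ℕ => C * (2 * (k : ℝ) + 1) / ((k : ℝ) ^ 2)) atTop (nhds 0) := by
  have h1 : Tendsto (fun k : ℕ => 3 * C * (1 / (k : ℝ))) atTop (nhds 0) := by
    have := tendsto_one_div_atTop_nhds_zero_nat.const_mul (3 * C)
    simpa using this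
  refine squeeze_zero' ?_ ?_ h1
  · filter_upwards [eventually_atTop.mpr ⟨1, fun k (hk : 1 ≤ k) => hk⟩] with k hk
    have hk0 : (0:ℝ) < (k:ℝ) := by exact_mod_cast hk
    positivity
  · filter_upwards [eventually_atTop.mpr ⟨1, fun k (hk : 1 ≤ k) => hk⟩] with k hk
    have hk0 : (0:ℝ) ≤ (k:ℝ) := Nat.cast_nonneg k
    have hk1 : (1:ℝ) ≤ (k:ℝ) := by exact_mod_cast hk
    rw [div_le_iff₀ (by positivity)]
    have : 3 * C * (1 / (k:ℝ)) * (k:ℝ)^2 = 3 * C * (k:ℝ) := by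
      field_simp
    rw [this]
    nlinarith

lemma gap {a : ℕ → ℝ} {C : ℝ} (hC : 0 ≤ C) (ha : ∀ j, |a j| ≤ C)
    (h : Tendsto (fun k : ℕ => (∑ j ∈ Finset.range ((k + 1) ^ 2), a j) / (((k + 1) ^ 2 : ℕ) : ℝ))
      atTop (nhds 0)) :
    Tendsto (fun L : ℕ => (∑ j ∈ Finset.range L, a j) / (L : ℝ)) atTop (nhds 0) := by
  set s : ℕ → ℝ := fun L => ∑ j ∈ Finset.range L, a j with hs
  have hq : Tendsto (fun k : ℕ => s (k ^ 2) / ((k ^ 2 : ℕ) : ℝ)) atTop (nhds 0) := by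
    rw [← Filter.tendsto_add_atTop_iff_nat 1]
    exact h
  have key : ∀ L : ℕ, 1 ≤ L → |s L / (L : ℝ)|
      ≤ |s ((Nat.sqrt L) ^ 2) / (((Nat.sqrt L) ^ 2 : ℕ) : ℝ)|
        + 2 * C * (2 * (Nat.sqrt L : ℝ) + 1) / ((Nat.sqrt L : ℝ) ^ 2) := by
    intro L hL
    set k := Nat.sqrt L with hk
    have hk1 : 1 ≤ k := Nat.le_sqrt.mpr (by omega)
    have hk2 : k ^ 2 ≤ L := Nat.sqrt_le' L
    have hk3 : L < (k + 1) ^ 2 := Nat.lt_succ_sqrt' L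
    have hk4 : L ≤ k ^ 2 + 2 * k := by
      have e1 : (k + 1) ^ 2 = k ^ 2 + 2 * k + 1 := by ring
      omega
    have hA : (0:ℝ) < ((k ^ 2 : ℕ) : ℝ) := by
      have : 0 < k ^ 2 := pow_pos hk1 2
      exact_mod_cast this
    have hB : (0:ℝ) < (L : ℝ) := by exact_mod_cast (by omega : 0 < L)
    have hAB : ((k ^ 2 : ℕ) : ℝ) ≤ (L : ℝ) := Nat.cast_le.mpr hk2
    have hgapn : (L : ℝ) - ((k ^ 2 : ℕ) : ℝ) ≤ 2 * (k:ℝ) + 1 := by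
      have : (L:ℝ) ≤ ((k ^ 2 : ℕ):ℝ) + 2 * (k:ℝ) + 1 := by
        push_cast
        exact_mod_cast (by exact_mod_cast Nat.le_succ_of_le hk4 : (L:ℝ) ≤ ((k^2 + 2*k + 1 : ℕ) : ℝ))
      linarith
    have hdiff : |s L - s (k ^ 2)| ≤ C * (2 * (k:ℝ) + 1) := by
      have e2 := Finset.sum_Ico_eq_sub a hk2
      have e3 : s L - s (k ^ 2) = ∑ j ∈ Finset.Ico (k ^ 2) L, a j := by
        rw [hs, e2]
      rw [e3]
      calc |∑ j ∈ Finset.Ico (k ^ 2) L, a j| ≤ ∑ j ∈ Finset.Ico (k ^ 2) L, |a j| :=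
            Finset.abs_sum_le_sum_abs _ _
        _ ≤ ∑ _j ∈ Finset.Ico (k ^ 2) L, C := Finset.sum_le_sum fun j _ => ha j
        _ = ((L - k ^ 2 : ℕ) : ℝ) * C := by
            rw [Finset.sum_const, Nat.card_Ico, nsmul_eq_mul]
        _ ≤ (2 * (k:ℝ) + 1) * C := by
            refine mul_le_mul_of_nonneg_right ?_ hC
            have : ((L - k ^ 2 : ℕ) : ℝ) = (L:ℝ) - ((k ^ 2:ℕ):ℝ) := by
              exact_mod_cast Nat.cast_sub (R := ℝ) hk2
            rw [this]
            exact hgapn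
        _ = C * (2 * (k:ℝ) + 1) := by ring
    have hsk : |s (k ^ 2)| ≤ C * ((k ^ 2 : ℕ) : ℝ) := by
      rw [hs]
      calc |∑ j ∈ Finset.range (k ^ 2), a j| ≤ ∑ j ∈ Finset.range (k ^ 2), |a j| :=
            Finset.abs_sum_le_sum_abs _ _
        _ ≤ ∑ _j ∈ Finset.range (k ^ 2), C := Finset.sum_le_sum fun j _ => ha j
        _ = ((k ^ 2 : ℕ) : ℝ) * C := by rw [Finset.sum_const, Finset.card_range, nsmul_eq_mul]
        _ = C * ((k ^ 2 : ℕ) : ℝ) := by ring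
    have main : |s L / (L:ℝ) - s (k ^ 2) / ((k ^ 2 : ℕ) : ℝ)|
        ≤ 2 * C * (2 * (k:ℝ) + 1) / ((k:ℝ) ^ 2) := by
      rw [div_sub_div _ _ (ne_of_gt hB) (ne_of_gt hA), abs_div,
        abs_of_pos (mul_pos hB hA)]
      have hnum : |s L * ((k ^ 2 : ℕ):ℝ) - (L:ℝ) * s (k ^ 2)|
          ≤ 2 * C * (2 * (k:ℝ) + 1) * ((k ^ 2 : ℕ):ℝ) := by
        have e4 : s L * ((k ^ 2 : ℕ):ℝ) - (L:ℝ) * s (k ^ 2)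
            = (s L - s (k ^ 2)) * ((k ^ 2 : ℕ):ℝ) + s (k ^ 2) * (((k ^ 2:ℕ):ℝ) - (L:ℝ)) := by
          ring
        rw [e4]
        calc |(s L - s (k ^ 2)) * ((k ^ 2 : ℕ):ℝ) + s (k ^ 2) * (((k ^ 2:ℕ):ℝ) - (L:ℝ))|
            ≤ |(s L - s (k ^ 2)) * ((k ^ 2 : ℕ):ℝ)|
              + |s (k ^ 2) * (((k ^ 2:ℕ):ℝ) - (L:ℝ))| := abs_add_le _ _
          _ = |s L - s (k ^ 2)| * ((k ^ 2 : ℕ):ℝ)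
              + |s (k ^ 2)| * ((L:ℝ) - ((k ^ 2:ℕ):ℝ)) := by
              rw [abs_mul, abs_mul, abs_of_pos hA,
                abs_sub_comm ((k ^ 2 : ℕ):ℝ) (L:ℝ),
                abs_of_nonneg (by linarith : (0:ℝ) ≤ (L:ℝ) - ((k ^ 2:ℕ):ℝ)),
                abs_sub_comm (s L) (s (k ^ 2))]
          _ ≤ C * (2 * (k:ℝ) + 1) * ((k ^ 2 : ℕ):ℝ)
              + C * ((k ^ 2 : ℕ):ℝ) * (2 * (k:ℝ) + 1) := by
              refine add_le_add (mul_le_mul_of_nonneg_right hdiff hA.le) ?_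
              refine mul_le_mul hsk hgapn (by linarith) ?_
              exact mul_nonneg hC hA.le
          _ = 2 * C * (2 * (k:ℝ) + 1) * ((k ^ 2 : ℕ):ℝ) := by ring
      calc |s L * ((k ^ 2 : ℕ):ℝ) - (L:ℝ) * s (k ^ 2)| / ((L:ℝ) * ((k ^ 2 : ℕ):ℝ))
          ≤ 2 * C * (2 * (k:ℝ) + 1) * ((k ^ 2 : ℕ):ℝ) / ((L:ℝ) * ((k ^ 2 : ℕ):ℝ)) :=
            by gcongr
        _ = 2 * C * (2 * (k:ℝ) + 1) / (L:ℝ) := by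
            rw [mul_div_assoc, mul_comm (L:ℝ) _, ← div_div, div_self (ne_of_gt hA)]
            ring
        _ ≤ 2 * C * (2 * (k:ℝ) + 1) / ((k ^ 2 : ℕ):ℝ) := by
            refine div_le_div_of_nonneg_left ?_ hA hAB
            have : (0:ℝ) ≤ (k:ℝ) := Nat.cast_nonneg k
            positivity
        _ = 2 * C * (2 * (k:ℝ) + 1) / ((k:ℝ) ^ 2) := by push_cast; ring
    calc |s L / (L:ℝ)|
        ≤ |s (k ^ 2) / ((k ^ 2 : ℕ) : ℝ)| + |s L / (L:ℝ) - s (k ^ 2) / ((k ^ 2 : ℕ) : ℝ)| := by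
          have e5 := abs_add_le (s (k ^ 2) / ((k ^ 2 : ℕ) : ℝ))
            (s L / (L:ℝ) - s (k ^ 2) / ((k ^ 2 : ℕ) : ℝ))
          calc |s L / (L:ℝ)|
              = |s (k ^ 2) / ((k ^ 2 : ℕ) : ℝ)
                + (s L / (L:ℝ) - s (k ^ 2) / ((k ^ 2 : ℕ) : ℝ))| := by ring_nf
            _ ≤ _ := e5
      _ ≤ _ := add_le_add le_rfl main
  have hφ : Tendsto (fun k : ℕ => |s (k ^ 2) / ((k ^ 2 : ℕ) : ℝ)|
      + 2 * C * (2 * (k:ℝ) + 1) / ((k:ℝ) ^ 2)) atTop (nhds 0) := by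
    have t1 : Tendsto (fun k : ℕ => |s (k ^ 2) / ((k ^ 2 : ℕ) : ℝ)|) atTop (nhds 0) := by
      have := hq.abs
      simpa using this
    have t2 := ratio_tendsto_zero (by linarith : (0:ℝ) ≤ 2 * C)
    have := t1.add t2
    simpa using this
  have hcomp : Tendsto (fun L : ℕ => |s ((Nat.sqrt L) ^ 2) / (((Nat.sqrt L) ^ 2 : ℕ) : ℝ)|
      + 2 * C * (2 * (Nat.sqrt L : ℝ) + 1) / ((Nat.sqrt L : ℝ) ^ 2)) atTop (nhds 0) :=
    hφ.comp sqrt_tendsto_atTop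
  have habs : Tendsto (fun L : ℕ => |s L / (L : ℝ)|) atTop (nhds 0) :=
    squeeze_zero' (Filter.Eventually.of_forall fun L => abs_nonneg _)
      (Filter.eventually_atTop.mpr ⟨1, fun L hL => key L hL⟩) hcomp
  exact (tendsto_zero_iff_abs_tendsto_zero _).mpr habs

end RealAux

section LLN

lemma lln {X : Type*} [MetricSpace X] [CompactSpace X] [Nonempty X]
    [MeasurableSpace X] [BorelSpace X]
    {M : ℕ} (hM : 0 < M) (f : Fin M → X → X) (l : NNReal) (hl : l < 1)
    (hf : ∀ m, LipschitzWith l (f m))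
    (p : Fin M → NNReal) (hp : ∑ m, p m = 1)
    (μ : Measure X) (hμ : IsProbabilityMeasure μ)
    (hμinv : (∑ m, (p m : ENNReal) • μ.map (f m)) = μ)
    (x₁ : X)
    (P : Measure (ℕ → Fin M)) (hP : IsProbabilityMeasure P)
    (hPiid : ∀ (k : ℕ) (c : ℕ → Fin M),
      P {σ | ∀ j, j < k → σ j = c j} = ∏ j ∈ Finset.range k, (p (c j) : ENNReal))
    {g : X → ℝ} {K : ℝ} (hK : 0 ≤ K) (hg : ∀ x y, |g x - g y| ≤ K * dist x y) :
    ∀ᵐ σ ∂P, Tendsto (fun L : ℕ => (∑ j ∈ Finset.range L, g (ifsOrbit f x₁ σ j)) / (L : ℝ))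
      atTop (nhds (∫ x, g x ∂μ)) := by
  classical
  have hp1 : ∑ m, (p m : ℝ) = 1 := by exact_mod_cast hp
  set rr : ℝ := (l : ℝ) with hrr
  have hrr0 : 0 ≤ rr := l.2
  have hrr1 : rr < 1 := by exact_mod_cast hl
  have h1rr : 0 < 1 - rr := by linarith
  set D := diam (Set.univ : Set X) with hDdef
  have hD0 : 0 ≤ D := diam_nonneg
  set cst := ∫ x, g x ∂μ with hcst
  set gb : X → ℝ := fun w => g w - cst with hgbdef
  have hBnd : ∀ (n : ℕ) (x : X), |(TT f p)^[n] gb x| ≤ K * D * rr ^ n :=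
    fun n x => centered_bound hp1 hf μ hμ hμinv hK hg n x
  have hgb0 : ∀ x : X, |gb x| ≤ K * D := fun x => by
    have := hBnd 0 x
    simpa using this
  set aa : ℕ → ℝ := fun n => (TT f p)^[n] gb x₁ with haa
  have haa_def : ∀ n : ℕ, (TT f p)^[n] gb x₁ = aa n := fun n => rfl
  have haa_bd : ∀ n, |aa n| ≤ K * D * rr ^ n := fun n => hBnd n x₁
  set Y : ℕ → (ℕ → Fin M) → ℝ := fun j σ => gb (ifsOrbit f x₁ σ j) - aa j with hY
  have hKD : 0 ≤ K * D := mul_nonneg hK hD0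
  -- locality of the orbit
  have horb_loc : ∀ (L j : ℕ), j ≤ L → ∀ σ : ℕ → Fin M,
      ifsOrbit f x₁ (ext hM (fun i : Fin L => σ (i : ℕ))) j = ifsOrbit f x₁ σ j := by
    intro L j hj σ
    refine orbit_congr f x₁ fun i hi => ?_
    rw [ext_lt hM _ (lt_of_lt_of_le hi hj)]
  -- covariance bound, ordered case
  have hcov : ∀ (i n L : ℕ), i + n ≤ L →
      |∑ c : Fin L → Fin M, Wt p c * (Y i (ext hM c) * Y (i + n) (ext hM c))|
        ≤ 2 * (K * D) ^ 2 * rr ^ n := by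
    intro i n L hL
    have hiL : i ≤ L := le_trans (Nat.le_add_right i n) hL
    have e1 : ∑ c : Fin L → Fin M, Wt p c * (Y i (ext hM c) * Y (i + n) (ext hM c))
        = (TT f p)^[i] (fun z => gb z * (TT f p)^[n] gb z) x₁ - aa i * aa (i + n) := by
      have expand : ∀ c : Fin L → Fin M,
          Wt p c * (Y i (ext hM c) * Y (i + n) (ext hM c))
          = Wt p c * (gb (ifsOrbit f x₁ (ext hM c) i) * gb (ifsOrbit f x₁ (ext hM c) (i + n)))
            - aa (i + n) * (Wt p c * gb (ifsOrbit f x₁ (ext hM c) i))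
            - aa i * (Wt p c * gb (ifsOrbit f x₁ (ext hM c) (i + n)))
            + (aa i * aa (i + n)) * Wt p c := by
        intro c
        simp only [hY]
        ring
      rw [Finset.sum_congr rfl fun c _ => expand c, Finset.sum_add_distrib,
        Finset.sum_sub_distrib, Finset.sum_sub_distrib, ← Finset.mul_sum, ← Finset.mul_sum,
        ← Finset.mul_sum, EV2 hM hp1 hL (fun z w => gb z * gb w) x₁,
        EV1 hM hp1 hiL gb x₁, EV1 hM hp1 hL gb x₁, Wt_sum_one hp1 L,
        haa_def i, haa_def (i + n)]
      have e2 : (fun z => (TT f p)^[n] (fun w => gb z * gb w) z)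
          = fun z => gb z * (TT f p)^[n] gb z := by
        funext z
        rw [TT_iter_mul_left]
      rw [e2]
      ring
    rw [e1]
    have b1 : |(TT f p)^[i] (fun z => gb z * (TT f p)^[n] gb z) x₁|
        ≤ (K * D) * (K * D * rr ^ n) := by
      refine TT_iter_bound hp1 (fun x => ?_) i x₁
      rw [abs_mul]
      exact mul_le_mul (hgb0 x) (hBnd n x) (abs_nonneg _) hKD
    have b2 : |aa i * aa (i + n)| ≤ (K * D) * (K * D * rr ^ n) := by
      rw [abs_mul]
      refine mul_le_mul ?_ ?_ (abs_nonneg _) hKD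
      · refine (haa_bd i).trans ?_
        have h5 : rr ^ i ≤ 1 := pow_le_one₀ hrr0 hrr1.le
        nlinarith
      · refine (haa_bd (i + n)).trans ?_
        refine mul_le_mul_of_nonneg_left ?_ hKD
        exact pow_le_pow_of_le_one hrr0 hrr1.le (Nat.le_add_left n i)
    calc |(TT f p)^[i] (fun z => gb z * (TT f p)^[n] gb z) x₁ - aa i * aa (i + n)|
        ≤ |(TT f p)^[i] (fun z => gb z * (TT f p)^[n] gb z) x₁| + |aa i * aa (i + n)| :=
          abs_sub _ _
      _ ≤ (K * D) * (K * D * rr ^ n) + (K * D) * (K * D * rr ^ n) := add_le_add b1 b2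
      _ = 2 * (K * D) ^ 2 * rr ^ n := by ring
  -- covariance bound, general case
  have hcov' : ∀ (i j L : ℕ), i < L → j < L →
      |∑ c : Fin L → Fin M, Wt p c * (Y i (ext hM c) * Y j (ext hM c))|
        ≤ 2 * (K * D) ^ 2 * rr ^ (Nat.dist i j) := by
    intro i j L hi hj
    rcases le_total i j with hij | hij
    · obtain ⟨n, rfl⟩ := Nat.exists_eq_add_of_le hij
      rw [Nat.dist_eq_sub_of_le (Nat.le_add_right i n), Nat.add_sub_cancel_left]
      exact hcov i n L hj.le
    · obtain ⟨n, rfl⟩ := Nat.exists_eq_add_of_le hij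
      rw [Nat.dist_comm, Nat.dist_eq_sub_of_le (Nat.le_add_right j n), Nat.add_sub_cancel_left]
      have ecomm : ∑ c : Fin L → Fin M, Wt p c * (Y (j + n) (ext hM c) * Y j (ext hM c))
          = ∑ c : Fin L → Fin M, Wt p c * (Y j (ext hM c) * Y (j + n) (ext hM c)) :=
        Finset.sum_congr rfl fun c _ => by ring
      rw [ecomm]
      exact hcov j n L hi.le
  set AA := 4 * (K * D) ^ 2 / (1 - rr) with hAAdef
  have hAA0 : 0 ≤ AA := div_nonneg (by positivity) h1rr.le
  -- variance bound
  have hvar : ∀ L : ℕ,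
      ∑ c : Fin L → Fin M, Wt p c * (∑ j ∈ Finset.range L, Y j (ext hM c)) ^ 2
        ≤ AA * L := by
    intro L
    have e1 : ∀ c : Fin L → Fin M,
        Wt p c * (∑ j ∈ Finset.range L, Y j (ext hM c)) ^ 2
        = ∑ i ∈ Finset.range L, ∑ j ∈ Finset.range L,
            Wt p c * (Y i (ext hM c) * Y j (ext hM c)) := by
      intro c
      rw [sq, Finset.sum_mul_sum, Finset.mul_sum]
      refine Finset.sum_congr rfl fun i _ => ?_
      rw [Finset.mul_sum]
    rw [Finset.sum_congr rfl fun c _ => e1 c, Finset.sum_comm]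
    have e2 : ∀ i ∈ Finset.range L,
        ∑ c : Fin L → Fin M, ∑ j ∈ Finset.range L,
            Wt p c * (Y i (ext hM c) * Y j (ext hM c))
        = ∑ j ∈ Finset.range L, ∑ c : Fin L → Fin M,
            Wt p c * (Y i (ext hM c) * Y j (ext hM c)) := fun i _ => Finset.sum_comm
    rw [Finset.sum_congr rfl e2]
    calc ∑ i ∈ Finset.range L, ∑ j ∈ Finset.range L,
          ∑ c : Fin L → Fin M, Wt p c * (Y i (ext hM c) * Y j (ext hM c))
        ≤ ∑ i ∈ Finset.range L, ∑ j ∈ Finset.range L,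
            2 * (K * D) ^ 2 * rr ^ (Nat.dist i j) := by
          refine Finset.sum_le_sum fun i hi => Finset.sum_le_sum fun j hj => ?_
          exact le_trans (le_abs_self _)
            (hcov' i j L (Finset.mem_range.mp hi) (Finset.mem_range.mp hj))
      _ = 2 * (K * D) ^ 2 * ∑ i ∈ Finset.range L, ∑ j ∈ Finset.range L,
            rr ^ (Nat.dist i j) := by
          rw [Finset.mul_sum]
          refine Finset.sum_congr rfl fun i _ => ?_
          rw [Finset.mul_sum]
      _ ≤ 2 * (K * D) ^ 2 * (2 * L / (1 - rr)) := by
          refine mul_le_mul_of_nonneg_left (grid_bound hrr0 hrr1 L) (by positivity)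
      _ = AA * L := by
          rw [hAAdef]
          ring
  -- Chebyshev
  have hcheb : ∀ (L : ℕ), 1 ≤ L → ∀ (ε : ℝ), 0 < ε →
      P {σ | ε ≤ |(∑ j ∈ Finset.range L, Y j σ) / (L : ℝ)|}
        ≤ ENNReal.ofReal ((AA / L) / ε ^ 2) := by
    intro L hL ε hε
    have hL0 : (0:ℝ) < (L:ℝ) := by exact_mod_cast hL
    have hZloc : ∀ σ : ℕ → Fin M,
        (fun σ => (∑ j ∈ Finset.range L, Y j σ) / (L : ℝ)) σ
        = (fun σ => (∑ j ∈ Finset.range L, Y j σ) / (L : ℝ))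
            (ext hM (fun i : Fin L => σ (i : ℕ))) := by
      intro σ
      simp only []
      congr 1
      refine Finset.sum_congr rfl fun j hj => ?_
      simp only [hY]
      rw [horb_loc L j (Finset.mem_range.mp hj).le σ]
    have h1 := cheb P hM hp1 hPiid (fun σ => (∑ j ∈ Finset.range L, Y j σ) / (L : ℝ))
      hZloc hε
    refine h1.trans (ENNReal.ofReal_le_ofReal ?_)
    have e2 : ∀ c : Fin L → Fin M,
        Wt p c * ((∑ j ∈ Finset.range L, Y j (ext hM c)) / (L : ℝ)) ^ 2
        = (Wt p c * (∑ j ∈ Finset.range L, Y j (ext hM c)) ^ 2) / (L : ℝ) ^ 2 := by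
      intro c
      rw [div_pow]
      ring
    rw [Finset.sum_congr rfl fun c _ => e2 c, ← Finset.sum_div]
    have e3 : (∑ c : Fin L → Fin M, Wt p c * (∑ j ∈ Finset.range L, Y j (ext hM c)) ^ 2)
        / (L : ℝ) ^ 2 ≤ AA / L := by
      calc (∑ c : Fin L → Fin M, Wt p c * (∑ j ∈ Finset.range L, Y j (ext hM c)) ^ 2)
            / (L : ℝ) ^ 2
          ≤ (AA * L) / (L : ℝ) ^ 2 := by gcongr; exact hvar L
        _ = AA / L := by
            rw [sq]
            rw [mul_comm (L:ℝ) (L:ℝ)]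
            rw [← div_div, mul_div_assoc, div_self (ne_of_gt hL0), mul_one]
    have hε2 : (0:ℝ) < ε ^ 2 := pow_pos hε 2
    rw [div_le_div_iff₀ hε2 hε2]
    exact mul_le_mul_of_nonneg_right e3 hε2.le
  -- Borel--Cantelli
  have hBC : ∀ t : ℕ, ∀ᵐ σ ∂P, ∀ᶠ k in atTop,
      ¬ ((1:ℝ) / ((t:ℝ) + 1)
        ≤ |(∑ j ∈ Finset.range ((k + 1) ^ 2), Y j σ) / (((k + 1) ^ 2 : ℕ) : ℝ)|) := by
    intro t
    set Ev : ℕ → Set (ℕ → Fin M) := fun k =>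
      {σ | (1:ℝ) / ((t:ℝ) + 1)
        ≤ |(∑ j ∈ Finset.range ((k + 1) ^ 2), Y j σ) / (((k + 1) ^ 2 : ℕ) : ℝ)|} with hEv
    have hεp : (0:ℝ) < 1 / ((t:ℝ) + 1) := by positivity
    have hbound : ∀ k : ℕ, P (Ev k)
        ≤ ENNReal.ofReal ((AA * ((t:ℝ) + 1) ^ 2) * (1 / (((k:ℝ) + 1) ^ 2))) := by
      intro k
      have hL1 : 1 ≤ (k + 1) ^ 2 := Nat.one_le_iff_ne_zero.mpr (by positivity)
      have h2 := hcheb ((k + 1) ^ 2) hL1 (1 / ((t:ℝ) + 1)) hεp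
      refine h2.trans (ENNReal.ofReal_le_ofReal (le_of_eq ?_))
      have hc : (((k + 1) ^ 2 : ℕ) : ℝ) = ((k:ℝ) + 1) ^ 2 := by push_cast; ring
      rw [hc]
      have ht1 : ((t:ℝ) + 1) ≠ 0 := by positivity
      have hk1 : ((k:ℝ) + 1) ^ 2 ≠ 0 := by positivity
      field_simp
    have hsum : ∑' k, P (Ev k) ≠ ⊤ := by
      have base : Summable (fun k : ℕ => 1 / ((k:ℝ) ^ 2)) :=
        Real.summable_one_div_nat_pow.mpr (by norm_num)
      have shift : Summable (fun k : ℕ => 1 / (((k:ℝ) + 1) ^ 2)) := by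
        have h3 := (summable_nat_add_iff (f := fun k : ℕ => 1 / ((k:ℝ) ^ 2)) 1).mpr base
        refine h3.congr fun k => ?_
        push_cast
        ring
      have hsummable : Summable
          (fun k : ℕ => (AA * ((t:ℝ) + 1) ^ 2) * (1 / (((k:ℝ) + 1) ^ 2))) :=
        shift.mul_left _
      refine ne_top_of_le_ne_top ?_ (ENNReal.tsum_le_tsum hbound)
      rw [← ENNReal.ofReal_tsum_of_nonneg (fun k => by positivity) hsummable]
      exact ENNReal.ofReal_ne_top
    have h3 := measure_limsup_atTop_eq_zero hsum
    have h4 : ∀ᵐ σ ∂P, σ ∉ limsup Ev atTop := measure_eq_zero_iff_ae_notMem.mp h3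
    refine h4.mono fun σ hσ => ?_
    have h5 : ¬ ∃ᶠ k in atTop, σ ∈ Ev k := fun hfreq =>
      hσ (Filter.mem_limsup_iff_frequently_mem.mpr hfreq)
    rw [Filter.not_frequently] at h5
    exact h5
  have hae := (MeasureTheory.ae_all_iff.mpr hBC)
  refine hae.mono fun σ hσ => ?_
  -- convergence along squares of the centered averages
  have hZsq : Tendsto (fun k : ℕ =>
      (∑ j ∈ Finset.range ((k + 1) ^ 2), Y j σ) / (((k + 1) ^ 2 : ℕ) : ℝ))
      atTop (nhds 0) := by
    rw [Metric.tendsto_atTop]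
    intro ε hε
    obtain ⟨t, ht⟩ := exists_nat_one_div_lt hε
    obtain ⟨N, hN⟩ := Filter.eventually_atTop.mp (hσ t)
    refine ⟨N, fun k hk => ?_⟩
    have h6 := hN k hk
    rw [Real.dist_eq, sub_zero]
    calc |(∑ j ∈ Finset.range ((k + 1) ^ 2), Y j σ) / (((k + 1) ^ 2 : ℕ) : ℝ)|
        < 1 / ((t:ℝ) + 1) := not_le.mp h6
      _ < ε := ht
  -- the deterministic part aa has averages tending to zero
  have hsq_tendsto : Tendsto (fun k : ℕ => ((k + 1) ^ 2 : ℕ)) atTop atTop := by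
    refine tendsto_atTop_mono (fun k => ?_) tendsto_id
    calc (id k : ℕ) ≤ k + 1 := Nat.le_succ k
      _ ≤ (k + 1) ^ 2 := Nat.le_self_pow (by norm_num) _
  have hmm : Tendsto (fun L : ℕ => (∑ j ∈ Finset.range L, aa j) / (L : ℝ))
      atTop (nhds 0) := by
    have hbd : ∀ L : ℕ, |∑ j ∈ Finset.range L, aa j| ≤ K * D / (1 - rr) := by
      intro L
      calc |∑ j ∈ Finset.range L, aa j| ≤ ∑ j ∈ Finset.range L, |aa j| :=
            Finset.abs_sum_le_sum_abs _ _
        _ ≤ ∑ j ∈ Finset.range L, K * D * rr ^ j := Finset.sum_le_sum fun j _ => haa_bd j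
        _ = K * D * ∑ j ∈ Finset.range L, rr ^ j := by rw [Finset.mul_sum]
        _ ≤ K * D * (1 / (1 - rr)) :=
            mul_le_mul_of_nonneg_left (geom_le hrr0 hrr1 L) hKD
        _ = K * D / (1 - rr) := by ring
    have h7 : Tendsto (fun L : ℕ => (K * D / (1 - rr)) * (1 / (L:ℝ))) atTop (nhds 0) := by
      have := tendsto_one_div_atTop_nhds_zero_nat.const_mul (K * D / (1 - rr))
      simpa using this
    refine (tendsto_zero_iff_abs_tendsto_zero _).mpr ?_
    refine squeeze_zero' (Filter.Eventually.of_forall fun L => abs_nonneg _) ?_ h7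
    filter_upwards [Filter.eventually_ge_atTop 1] with L hL
    have hL0 : (0:ℝ) < (L:ℝ) := by exact_mod_cast hL
    show |(∑ j ∈ Finset.range L, aa j) / (L:ℝ)| ≤ K * D / (1 - rr) * (1 / (L:ℝ))
    rw [abs_div, abs_of_pos hL0]
    rw [div_le_iff₀ hL0, mul_assoc, one_div, inv_mul_cancel₀ (ne_of_gt hL0), mul_one]
    exact hbd L
  have hmm_sq : Tendsto (fun k : ℕ =>
      (∑ j ∈ Finset.range ((k + 1) ^ 2), aa j) / (((k + 1) ^ 2 : ℕ) : ℝ))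
      atTop (nhds 0) := hmm.comp hsq_tendsto
  have hsq2 : Tendsto (fun k : ℕ =>
      (∑ j ∈ Finset.range ((k + 1) ^ 2), gb (ifsOrbit f x₁ σ j)) / (((k + 1) ^ 2 : ℕ) : ℝ))
      atTop (nhds 0) := by
    have h8 := hZsq.add hmm_sq
    rw [add_zero] at h8
    refine h8.congr fun k => ?_
    rw [← add_div, ← Finset.sum_add_distrib]
    congr 1
    refine Finset.sum_congr rfl fun j _ => ?_
    simp only [hY]
    ring
  -- fill the gaps
  have hgapped := gap hKD (fun j => hgb0 (ifsOrbit f x₁ σ j)) hsq2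
  -- conclude
  have e7 : ∀ L : ℕ, 1 ≤ L →
      (∑ j ∈ Finset.range L, gb (ifsOrbit f x₁ σ j)) / (L : ℝ) + cst
      = (∑ j ∈ Finset.range L, g (ifsOrbit f x₁ σ j)) / (L : ℝ) := by
    intro L hL
    have hL0 : (L:ℝ) ≠ 0 := by
      have : (0:ℝ) < (L:ℝ) := by exact_mod_cast hL
      exact ne_of_gt this
    have e8 : ∑ j ∈ Finset.range L, g (ifsOrbit f x₁ σ j)
        = ∑ j ∈ Finset.range L, gb (ifsOrbit f x₁ σ j) + (L:ℝ) * cst := by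
      have e9 : ∀ x : X, g x = gb x + cst := fun x => by simp [hgbdef]
      rw [Finset.sum_congr rfl fun j _ => e9 _, Finset.sum_add_distrib, Finset.sum_const,
        Finset.card_range, nsmul_eq_mul]
    rw [e8, add_div, mul_div_cancel_left₀ cst hL0]
  have h9 : Tendsto (fun L : ℕ =>
      (∑ j ∈ Finset.range L, gb (ifsOrbit f x₁ σ j)) / (L : ℝ) + cst)
      atTop (nhds (0 + cst)) := hgapped.add tendsto_const_nhds
  rw [zero_add] at h9
  refine h9.congr' ?_
  filter_upwards [Filter.eventually_ge_atTop 1] with L hL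
  exact e7 L hL

end LLN

section Bump

variable [MetricSpace X]

/-- basic Lipschitz bump function adapted to a ball -/
def bump (q : X) (ρ : ℚ) (n : ℕ) : X → ℝ :=
  fun x => max 0 (min 1 ((n : ℝ) * ((ρ : ℝ) - dist x q)))

lemma bump_nonneg (q : X) (ρ : ℚ) (n : ℕ) (x : X) : 0 ≤ bump q ρ n x := le_max_left _ _

lemma bump_le_one (q : X) (ρ : ℚ) (n : ℕ) (x : X) : bump q ρ n x ≤ 1 := by
  unfold bump
  rw [max_le_iff]
  exact ⟨zero_le_one, min_le_left _ _⟩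

lemma bump_lip (q : X) (ρ : ℚ) (n : ℕ) :
    ∀ x y, |bump q ρ n x - bump q ρ n y| ≤ (n : ℝ) * dist x y := by
  intro x y
  unfold bump
  calc |max 0 (min 1 ((n:ℝ) * ((ρ:ℝ) - dist x q))) - max 0 (min 1 ((n:ℝ) * ((ρ:ℝ) - dist y q)))|
      = |min 1 ((n:ℝ) * ((ρ:ℝ) - dist x q)) ⊔ 0 - min 1 ((n:ℝ) * ((ρ:ℝ) - dist y q)) ⊔ 0| := by
        rw [max_comm (0:ℝ) _, max_comm (0:ℝ) _]
    _ ≤ |min 1 ((n:ℝ) * ((ρ:ℝ) - dist x q)) - min 1 ((n:ℝ) * ((ρ:ℝ) - dist y q))| :=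
        abs_max_sub_max_le_abs _ _ _
    _ ≤ max |(1:ℝ) - 1| |(n:ℝ) * ((ρ:ℝ) - dist x q) - (n:ℝ) * ((ρ:ℝ) - dist y q)| :=
        abs_min_sub_min_le_max _ _ _ _
    _ = |(n:ℝ) * ((ρ:ℝ) - dist x q) - (n:ℝ) * ((ρ:ℝ) - dist y q)| := by
        rw [sub_self, abs_zero, max_eq_right (abs_nonneg _)]
    _ = (n:ℝ) * |dist y q - dist x q| := by
        have e : (n:ℝ) * ((ρ:ℝ) - dist x q) - (n:ℝ) * ((ρ:ℝ) - dist y q)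
            = (n:ℝ) * (dist y q - dist x q) := by ring
        rw [e, abs_mul, Nat.abs_cast]
    _ ≤ (n:ℝ) * dist x y := by
        refine mul_le_mul_of_nonneg_left ?_ (Nat.cast_nonneg n)
        rw [abs_sub_comm]
        exact abs_dist_sub_le x y q

/-- bump indexed by a triple, with centers from a fixed dense sequence -/
def bf (e0 : ℕ → X) (i : ℕ × ℚ × ℕ) : X → ℝ := bump (e0 i.1) i.2.1 i.2.2

/-- pointwise max of a finite family of bumps -/
def GG (e0 : ℕ → X) : List (ℕ × ℚ × ℕ) → X → ℝ
  | [] => fun _ => 0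
  | i :: L => fun x => max (bf e0 i x) (GG e0 L x)

lemma GG_nonneg (e0 : ℕ → X) (L : List (ℕ × ℚ × ℕ)) (x : X) : 0 ≤ GG e0 L x := by
  induction L with
  | nil => exact le_rfl
  | cons i L ih => exact le_trans ih (le_max_right _ _)

lemma GG_le_one (e0 : ℕ → X) (L : List (ℕ × ℚ × ℕ)) (x : X) : GG e0 L x ≤ 1 := by
  induction L with
  | nil => exact zero_le_one
  | cons i L ih => exact max_le (bump_le_one _ _ _ x) ih

lemma GG_lip (e0 : ℕ → X) (L : List (ℕ × ℚ × ℕ)) :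
    ∃ KL : ℝ, 0 ≤ KL ∧ ∀ x y, |GG e0 L x - GG e0 L y| ≤ KL * dist x y := by
  induction L with
  | nil => exact ⟨0, le_rfl, fun x y => by simp [GG]⟩
  | cons i L ih =>
    obtain ⟨KL, hKL0, hKL⟩ := ih
    refine ⟨max (i.2.2 : ℝ) KL, le_trans hKL0 (le_max_right _ _), fun x y => ?_⟩
    calc |GG e0 (i :: L) x - GG e0 (i :: L) y|
        = |max (bf e0 i x) (GG e0 L x) - max (bf e0 i y) (GG e0 L y)| := rfl
      _ ≤ max |bf e0 i x - bf e0 i y| |GG e0 L x - GG e0 L y| :=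
          abs_max_sub_max_le_max _ _ _ _
      _ ≤ max ((i.2.2 : ℝ) * dist x y) (KL * dist x y) :=
          max_le_max (bump_lip _ _ _ x y) (hKL x y)
      _ = max (i.2.2 : ℝ) KL * dist x y := (max_mul_of_nonneg _ _ dist_nonneg).symm

lemma GG_mem_le (e0 : ℕ → X) {L : List (ℕ × ℚ × ℕ)} {i : ℕ × ℚ × ℕ} (hi : i ∈ L) (x : X) :
    bf e0 i x ≤ GG e0 L x := by
  induction L with
  | nil => exact absurd hi List.not_mem_nil
  | cons a L ih =>
    rcases List.mem_cons.mp hi with h | h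
    · rw [h]
      exact le_max_left _ _
    · exact le_trans (ih h) (le_max_right _ _)

lemma GG_append (e0 : ℕ → X) (L1 L2 : List (ℕ × ℚ × ℕ)) (x : X) :
    GG e0 (L1 ++ L2) x = max (GG e0 L1 x) (GG e0 L2 x) := by
  induction L1 with
  | nil => simp [GG, max_eq_right (GG_nonneg e0 L2 x)]
  | cons a L1 ih =>
    show max (bf e0 a x) (GG e0 (L1 ++ L2) x) = max (max (bf e0 a x) (GG e0 L1 x)) (GG e0 L2 x)
    rw [ih, max_assoc]

lemma GG_all_zero (e0 : ℕ → X) {L : List (ℕ × ℚ × ℕ)} {x : X}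
    (h : ∀ i ∈ L, bf e0 i x = 0) : GG e0 L x = 0 := by
  induction L with
  | nil => rfl
  | cons a L ih =>
    show max (bf e0 a x) (GG e0 L x) = 0
    rw [h a List.mem_cons_self, ih fun i hi => h i (List.mem_cons_of_mem a hi), max_self]

end Bump

section OpenApprox

lemma open_approx {X : Type*} [MetricSpace X] [CompactSpace X] [Nonempty X]
    [MeasurableSpace X] [BorelSpace X]
    (μ : Measure X) (hμ : IsProbabilityMeasure μ)
    (e0 : ℕ → X) (he0 : DenseRange e0)
    {U : Set X} (hU : IsOpen U) (hUne : U.Nonempty) :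
    ∃ Ls : ℕ → List (ℕ × ℚ × ℕ),
      (∀ k x, GG e0 (Ls k) x ≤ Set.indicator U (fun _ => (1:ℝ)) x) ∧
      Tendsto (fun k => ∫ x, GG e0 (Ls k) x ∂μ) atTop (nhds (μ U).toReal) := by
  haveI := hμ
  classical
  set good : Set (ℕ × ℚ × ℕ) := {i | ∀ x, bf e0 i x ≠ 0 → x ∈ U} with hgood
  have cover : ∀ x ∈ U, ∃ i ∈ good, bf e0 i x = 1 := by
    intro x hx
    obtain ⟨ε, hε, hball⟩ := Metric.isOpen_iff.mp hU x hx
    obtain ⟨a, ha⟩ := he0.exists_dist_lt x (by positivity : 0 < ε/4)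
    obtain ⟨ρ, hρ1, hρ2⟩ := exists_rat_btwn (show ε/4 < ε/2 by linarith)
    have hd : dist x (e0 a) < (ρ:ℝ) := lt_trans ha hρ1
    have hδ : 0 < (ρ:ℝ) - dist x (e0 a) := by linarith
    obtain ⟨n, hn⟩ := exists_nat_ge (1/((ρ:ℝ) - dist x (e0 a)))
    refine ⟨(a, ρ, n), ?_, ?_⟩
    · intro y hy
      have h1 : dist y (e0 a) < (ρ:ℝ) := by
        by_contra hcon
        push_neg at hcon
        apply hy
        show max 0 (min 1 ((n:ℝ) * ((ρ:ℝ) - dist y (e0 a)))) = 0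
        rw [max_eq_left]
        have ht : (n:ℝ) * ((ρ:ℝ) - dist y (e0 a)) ≤ 0 :=
          mul_nonpos_of_nonneg_of_nonpos (Nat.cast_nonneg n) (by linarith)
        exact le_trans (min_le_right _ _) ht
      apply hball
      have h2 : dist y x < ε := by
        calc dist y x ≤ dist y (e0 a) + dist (e0 a) x := dist_triangle _ _ _
          _ < (ρ:ℝ) + ε/4 := by
              rw [dist_comm (e0 a) x]
              linarith
          _ < ε := by linarith
      exact Metric.mem_ball.mpr h2
    · show max 0 (min 1 ((n:ℝ) * ((ρ:ℝ) - dist x (e0 a)))) = 1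
      have h2 : 1 ≤ (n:ℝ) * ((ρ:ℝ) - dist x (e0 a)) := by
        rw [div_le_iff₀ hδ] at hn
        linarith
      rw [min_eq_left h2, max_eq_right zero_le_one]
  have hgood_ne : good.Nonempty := by
    obtain ⟨x, hx⟩ := hUne
    obtain ⟨i, hi, _⟩ := cover x hx
    exact ⟨i, hi⟩
  obtain ⟨ee, hee⟩ := (Set.to_countable good).exists_eq_range hgood_ne
  set Ls : ℕ → List (ℕ × ℚ × ℕ) := fun k => (List.range (k+1)).map ee with hLs
  have hmemgood : ∀ k i, i ∈ Ls k → i ∈ good := by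
    intro k i hi
    obtain ⟨a, _, rfl⟩ := List.mem_map.mp hi
    rw [hee]
    exact Set.mem_range_self a
  have hle : ∀ k x, GG e0 (Ls k) x ≤ Set.indicator U (fun _ => (1:ℝ)) x := by
    intro k x
    by_cases hx : x ∈ U
    · rw [Set.indicator_of_mem hx]
      exact GG_le_one e0 _ x
    · rw [Set.indicator_of_notMem hx]
      refine le_of_eq (GG_all_zero e0 fun i hi => ?_)
      by_contra hne
      exact hx ((hmemgood k i hi) x hne)
  refine ⟨Ls, hle, ?_⟩
  have hmono : ∀ x : X, Monotone (fun k => GG e0 (Ls k) x) := by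
    intro x
    refine monotone_nat_of_le_succ fun k => ?_
    have e1 : Ls (k+1) = Ls k ++ [ee (k+1)] := by
      show (List.range (k+2)).map ee = (List.range (k+1)).map ee ++ [ee (k+1)]
      rw [List.range_succ, List.map_append]
      rfl
    rw [e1, GG_append]
    exact le_max_left _ _
  have hptw : ∀ x : X, Tendsto (fun k => GG e0 (Ls k) x) atTop
      (nhds (Set.indicator U (fun _ => (1:ℝ)) x)) := by
    intro x
    by_cases hx : x ∈ U
    · rw [Set.indicator_of_mem hx]
      obtain ⟨i, hi, hbf⟩ := cover x hx
      rw [hee] at hi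
      obtain ⟨a, rfl⟩ := hi
      have hev : ∀ᶠ k in atTop, GG e0 (Ls k) x = 1 := by
        filter_upwards [Filter.eventually_ge_atTop a] with k hk
        have hmem : ee a ∈ Ls k := List.mem_map.mpr ⟨a, List.mem_range.mpr (by omega), rfl⟩
        exact le_antisymm (GG_le_one e0 _ x) (hbf ▸ GG_mem_le e0 hmem x)
      exact Tendsto.congr' (by filter_upwards [hev] with k hk; exact hk.symm) tendsto_const_nhds
    · rw [Set.indicator_of_notMem hx]
      have hzero : ∀ k, GG e0 (Ls k) x = 0 := fun k => GG_all_zero e0 fun i hi => by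
        by_contra hne
        exact hx ((hmemgood k i hi) x hne)
      exact Tendsto.congr (fun k => (hzero k).symm) tendsto_const_nhds
  have hint : ∀ k, Integrable (fun x => GG e0 (Ls k) x) μ := by
    intro k
    obtain ⟨KL, hKL0, hKL⟩ := GG_lip e0 (Ls k)
    exact cont_integrable (lipR_continuous hKL) μ
  have hFint : Integrable (Set.indicator U (fun _ => (1:ℝ))) μ :=
    (integrable_const (1:ℝ)).indicator hU.measurableSet
  have hconv := integral_tendsto_of_tendsto_of_monotone hint hFint
    (Filter.Eventually.of_forall hmono) (Filter.Eventually.of_forall hptw)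
  rw [integral_indicator_const (1:ℝ) hU.measurableSet, smul_eq_mul, mul_one] at hconv
  exact hconv

end OpenApprox

end IFSaux

open IFSaux in
/-- **The random iteration algorithm.** Let `μ` be the measure attractor of the IFS, and
let `P` be the product measure on `{1,…,M}^ℕ` under which the coordinates are i.i.d.
with `Pr(σ_j = m) = p_m`.  Then for `P`-almost every `σ`, for every Borel set `B ⊆ X`
whose boundary is `μ`-null, the fraction of the first `l` points of the random orbit
lying in `B` converges to `μ(B)`. -/
theorem stmt_4 {X : Type*} [MetricSpace X] [CompactSpace X] [Nonempty X]
    [MeasurableSpace X] [BorelSpace X]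
    {M : ℕ} (hM : 0 < M) (f : Fin M → X → X) (l : NNReal) (hl : l < 1)
    (hf : ∀ m, LipschitzWith l (f m))
    (p : Fin M → NNReal) (hp : ∑ m, p m = 1)
    (μ : Measure X) (hμ : IsProbabilityMeasure μ)
    (hμinv : (∑ m, (p m : ENNReal) • μ.map (f m)) = μ)
    (x₁ : X)
    (P : Measure (ℕ → Fin M)) (hP : IsProbabilityMeasure P)
    (hPiid : ∀ (k : ℕ) (c : ℕ → Fin M),
      P {σ | ∀ j, j < k → σ j = c j} = ∏ j ∈ Finset.range k, (p (c j) : ENNReal)) :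
    ∀ᵐ σ ∂P, ∀ B : Set X, MeasurableSet B → μ (frontier B) = 0 →
      Tendsto (fun L : ℕ =>
          (∑ j ∈ Finset.range L, B.indicator (fun _ => (1 : ℝ)) (ifsOrbit f x₁ σ j)) / (L : ℝ))
        atTop (nhds (μ B).toReal) := by
  classical
  haveI := hμ
  haveI := hP
  set e0 : ℕ → X := TopologicalSpace.denseSeq X with he0def
  have he0 : DenseRange e0 := TopologicalSpace.denseRange_denseSeq X
  have hLLN : ∀ Lst : List (ℕ × ℚ × ℕ), ∀ᵐ σ ∂P,
      Tendsto (fun L : ℕ => (∑ j ∈ Finset.range L, GG e0 Lst (ifsOrbit f x₁ σ j)) / (L : ℝ))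
        atTop (nhds (∫ x, GG e0 Lst x ∂μ)) := by
    intro Lst
    obtain ⟨KL, hKL0, hKL⟩ := GG_lip e0 Lst
    exact lln hM f l hl hf p hp μ hμ hμinv x₁ P hP hPiid hKL0 hKL
  have hae := MeasureTheory.ae_all_iff.mpr hLLN
  refine hae.mono fun σ hσ => ?_
  intro B hBmeas hBfront
  set orb : ℕ → X := fun j => ifsOrbit f x₁ σ j with horb
  -- measure equalities
  have hmono1 : μ (interior B) ≤ μ B := measure_mono interior_subset
  have hmono2 : μ B ≤ μ (closure B) := measure_mono subset_closure
  have hclose_le : μ (closure B) ≤ μ (interior B) := by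
    calc μ (closure B) ≤ μ (interior B) + μ (frontier B) := by
          rw [closure_eq_interior_union_frontier B]
          exact measure_union_le _ _
      _ = μ (interior B) := by rw [hBfront, add_zero]
  have hIB : μ (interior B) = μ B := le_antisymm hmono1 (hmono2.trans hclose_le)
  have hCB : μ (closure B) = μ B := le_antisymm (hclose_le.trans hmono1) hmono2
  -- averaging helpers
  have havg_mono : ∀ (S T : Set X), S ⊆ T → ∀ L : ℕ,
      (∑ j ∈ Finset.range L, S.indicator (fun _ => (1:ℝ)) (orb j)) / (L : ℝ)
        ≤ (∑ j ∈ Finset.range L, T.indicator (fun _ => (1:ℝ)) (orb j)) / (L : ℝ) := by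
    intro S T hST L
    rw [div_eq_mul_inv, div_eq_mul_inv]
    refine mul_le_mul_of_nonneg_right ?_ (inv_nonneg.mpr (Nat.cast_nonneg L))
    exact Finset.sum_le_sum fun j _ =>
      Set.indicator_le_indicator_of_subset hST (fun _ => zero_le_one) _
  have havgG_le : ∀ (Lst : List (ℕ × ℚ × ℕ)) (S : Set X),
      (∀ x, GG e0 Lst x ≤ S.indicator (fun _ => (1:ℝ)) x) → ∀ L : ℕ,
      (∑ j ∈ Finset.range L, GG e0 Lst (orb j)) / (L : ℝ)
        ≤ (∑ j ∈ Finset.range L, S.indicator (fun _ => (1:ℝ)) (orb j)) / (L : ℝ) := by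
    intro Lst S hle L
    rw [div_eq_mul_inv, div_eq_mul_inv]
    refine mul_le_mul_of_nonneg_right ?_ (inv_nonneg.mpr (Nat.cast_nonneg L))
    exact Finset.sum_le_sum fun j _ => hle (orb j)
  have havg_nonneg : ∀ (S : Set X) (L : ℕ),
      0 ≤ (∑ j ∈ Finset.range L, S.indicator (fun _ => (1:ℝ)) (orb j)) / (L : ℝ) := by
    intro S L
    refine div_nonneg (Finset.sum_nonneg fun j _ => ?_) (Nat.cast_nonneg L)
    exact Set.indicator_nonneg (fun _ _ => zero_le_one) _
  have havg_le_one : ∀ (S : Set X) (L : ℕ),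
      (∑ j ∈ Finset.range L, S.indicator (fun _ => (1:ℝ)) (orb j)) / (L : ℝ) ≤ 1 := by
    intro S L
    rcases Nat.eq_zero_or_pos L with hL | hL
    · subst hL
      simp
    · have hL0 : (0:ℝ) < (L:ℝ) := by exact_mod_cast hL
      rw [div_le_one hL0]
      calc ∑ j ∈ Finset.range L, S.indicator (fun _ => (1:ℝ)) (orb j)
          ≤ ∑ _j ∈ Finset.range L, (1:ℝ) := by
            refine Finset.sum_le_sum fun j _ => ?_
            by_cases h : orb j ∈ S
            · rw [Set.indicator_of_mem h]
            · rw [Set.indicator_of_notMem h]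
              exact zero_le_one
        _ = (L:ℝ) := by rw [Finset.sum_const, Finset.card_range, nsmul_eq_mul, mul_one]
  rw [Metric.tendsto_atTop]
  intro ε hε
  -- lower bound
  have low : ∀ᶠ L in atTop, (μ B).toReal - ε/2
      ≤ (∑ j ∈ Finset.range L, B.indicator (fun _ => (1:ℝ)) (orb j)) / (L : ℝ) := by
    by_cases hint : interior B = ∅
    · have hB0 : μ B = 0 := by rw [← hIB, hint, measure_empty]
      rw [hB0, ENNReal.toReal_zero]
      exact Filter.Eventually.of_forall fun L => le_trans (by linarith) (havg_nonneg B L)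
    · obtain ⟨Ls, hleU, htend⟩ := open_approx μ hμ e0 he0 isOpen_interior
        (Set.nonempty_iff_ne_empty.mpr hint)
      have hev1 : ∀ᶠ k in atTop,
          (μ (interior B)).toReal - ε/4 ≤ ∫ x, GG e0 (Ls k) x ∂μ :=
        htend.eventually (eventually_ge_nhds (by linarith))
      obtain ⟨k0, hk0⟩ := hev1.exists
      have hev2 : ∀ᶠ L in atTop, (∫ x, GG e0 (Ls k0) x ∂μ) - ε/4
          ≤ (∑ j ∈ Finset.range L, GG e0 (Ls k0) (orb j)) / (L : ℝ) :=
        (hσ (Ls k0)).eventually (eventually_ge_nhds (by linarith))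
      refine hev2.mono fun L hL => ?_
      have c1 := havgG_le (Ls k0) (interior B) (hleU k0) L
      have c2 := havg_mono (interior B) B interior_subset L
      have c3 : (μ B).toReal = (μ (interior B)).toReal := by rw [hIB]
      linarith
  -- upper bound
  have high : ∀ᶠ L in atTop,
      (∑ j ∈ Finset.range L, B.indicator (fun _ => (1:ℝ)) (orb j)) / (L : ℝ)
        ≤ (μ B).toReal + ε/2 := by
    have hVopen : IsOpen (closure B)ᶜ := isClosed_closure.isOpen_compl
    have hcompl : (μ (closure B)).toReal + (μ (closure B)ᶜ).toReal = 1 := by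
      have h1 : μ (closure B) + μ (closure B)ᶜ = 1 :=
        prob_add_prob_compl isClosed_closure.measurableSet
      rw [← ENNReal.toReal_add (measure_ne_top μ _) (measure_ne_top μ _), h1,
        ENNReal.toReal_one]
    have h6 : (μ B).toReal = (μ (closure B)).toReal := by rw [hCB]
    by_cases hVne : (closure B)ᶜ = ∅
    · have h4 : (μ (closure B)).toReal = 1 := by
        rw [hVne, measure_empty] at hcompl
        simpa using hcompl
      refine Filter.Eventually.of_forall fun L => ?_
      have h5 := havg_le_one B L
      rw [h6, h4]
      linarith
    · obtain ⟨Ls, hleV, htend⟩ := open_approx μ hμ e0 he0 hVopen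
        (Set.nonempty_iff_ne_empty.mpr hVne)
      have hev1 : ∀ᶠ k in atTop,
          (μ (closure B)ᶜ).toReal - ε/4 ≤ ∫ x, GG e0 (Ls k) x ∂μ :=
        htend.eventually (eventually_ge_nhds (by linarith))
      obtain ⟨k1, hk1⟩ := hev1.exists
      have hev2 : ∀ᶠ L in atTop, (∫ x, GG e0 (Ls k1) x ∂μ) - ε/4
          ≤ (∑ j ∈ Finset.range L, GG e0 (Ls k1) (orb j)) / (L : ℝ) :=
        (hσ (Ls k1)).eventually (eventually_ge_nhds (by linarith))
      filter_upwards [hev2, Filter.eventually_ge_atTop 1] with L hL hL1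
      have hL0 : (L:ℝ) ≠ 0 := by
        have : (0:ℝ) < (L:ℝ) := by exact_mod_cast hL1
        exact ne_of_gt this
      have hid : (∑ j ∈ Finset.range L, (closure B).indicator (fun _ => (1:ℝ)) (orb j)) / (L : ℝ)
          + (∑ j ∈ Finset.range L, ((closure B)ᶜ).indicator (fun _ => (1:ℝ)) (orb j)) / (L : ℝ)
          = 1 := by
        rw [← add_div, ← Finset.sum_add_distrib]
        have e1 : ∀ x : X, (closure B).indicator (fun _ => (1:ℝ)) x
            + ((closure B)ᶜ).indicator (fun _ => (1:ℝ)) x = 1 := by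
          intro x
          have := congrFun (Set.indicator_self_add_compl (closure B) (fun _ : X => (1:ℝ))) x
          simpa using this
        rw [Finset.sum_congr rfl fun j _ => e1 (orb j), Finset.sum_const, Finset.card_range,
          nsmul_eq_mul, mul_one, div_self hL0]
      have c1 := havg_mono B (closure B) subset_closure L
      have c2 := havgG_le (Ls k1) ((closure B)ᶜ) (hleV k1) L
      rw [h6]
      linarith
  obtain ⟨N, hN⟩ := Filter.eventually_atTop.mp (low.and high)
  refine ⟨N, fun L hL => ?_⟩
  obtain ⟨h1, h2⟩ := hN L hL
  rw [Real.dist_eq, abs_sub_lt_iff]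
  constructor <;> linarith
end

section
/- Let F = {X; f_1, ..., f_M; p_1, ..., p_M} be an IFS with probabilities on a compact metric space (X, d), with common Lipschitz constant 0 ≤ l < 1, and suppose μ is the unique measure attractor of F. If B ⊆ X is a Borel set with f_m(B) ⊆ B for every m ∈ {1, ..., M}, then μ(B) = 0 or μ(B) = 1. -/
open Metric MeasureTheory Filter Set TopologicalSpace

/-- **Ergodicity of the IFS.** If `μ` is the unique measure attractor of the IFS `F`,
and `B` is a Borel set with `f_m(B) ⊆ B` for every `m`, then `μ(B) = 0` or `μ(B) = 1`. -/
theorem stmt_5 {X : Type*} [MetricSpace X] [CompactSpace X] [Nonempty X]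
    [MeasurableSpace X] [BorelSpace X]
    {M : ℕ} (hM : 0 < M) (f : Fin M → X → X) (l : NNReal) (hl : l < 1)
    (hf : ∀ m, LipschitzWith l (f m))
    (p : Fin M → NNReal) (hp : ∑ m, p m = 1)
    (μ : Measure X) (hμ : IsProbabilityMeasure μ)
    (hμinv : (∑ m, (p m : ENNReal) • μ.map (f m)) = μ)
    (huniq : ∀ ν : Measure X, IsProbabilityMeasure ν →
      (∑ m, (p m : ENNReal) • ν.map (f m)) = ν → ν = μ) :
    ∀ B : Set X, MeasurableSet B → (∀ m, f m '' B ⊆ B) → μ B = 0 ∨ μ B = 1 := by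
  intro B hBm hB
  by_cases hc : μ B = 0
  · exact Or.inl hc
  right
  have hfm : ∀ m, Measurable (f m) := fun m => (hf m).continuous.measurable
  -- basic expansion of invariance
  have hexp : ∀ A : Set X, MeasurableSet A →
      μ A = ∑ m, (p m : ENNReal) * μ (f m ⁻¹' A) := by
    intro A hA
    conv_lhs => rw [← hμinv]
    rw [Measure.coe_finset_sum, Finset.sum_apply]
    refine Finset.sum_congr rfl fun m _ => ?_
    rw [Measure.smul_apply, Measure.map_apply (hfm m) hA, smul_eq_mul]
  have hBsub : ∀ m, B ⊆ f m ⁻¹' B := fun m => Set.image_subset_iff.mp (hB m)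
  have hfin : μ B ≠ ⊤ := measure_ne_top μ B
  -- each p m * μ (f m ⁻¹' B \ B) = 0
  have hzero : ∀ m, (p m : ENNReal) * μ (f m ⁻¹' B \ B) = 0 := by
    have h1 : μ B = ∑ m, (p m : ENNReal) * μ (f m ⁻¹' B) := hexp B hBm
    have h2 : ∀ m, μ (f m ⁻¹' B) = μ B + μ (f m ⁻¹' B \ B) := by
      intro m
      have h := measure_inter_add_diff (μ := μ) (f m ⁻¹' B) hBm
      rw [Set.inter_eq_right.mpr (hBsub m)] at h
      exact h.symm
    have h3' : ∑ m, (p m : ENNReal) * μ (f m ⁻¹' B) =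
        μ B + ∑ m, (p m : ENNReal) * μ (f m ⁻¹' B \ B) := by
      calc ∑ m, (p m : ENNReal) * μ (f m ⁻¹' B)
          = ∑ m, (p m : ENNReal) * (μ B + μ (f m ⁻¹' B \ B)) :=
            Finset.sum_congr rfl fun m _ => by rw [h2 m]
        _ = (∑ m, (p m : ENNReal) * μ B) + ∑ m, (p m : ENNReal) * μ (f m ⁻¹' B \ B) := by
              rw [← Finset.sum_add_distrib]; exact Finset.sum_congr rfl fun m _ => mul_add _ _ _
        _ = μ B + ∑ m, (p m : ENNReal) * μ (f m ⁻¹' B \ B) := by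
              rw [← Finset.sum_mul]
              congr 1
              rw [show (∑ m, (p m : ENNReal)) = ((∑ m, p m : NNReal) : ENNReal) by
                push_cast; rfl, hp]
              simp
    have h3 : μ B + 0 = μ B + ∑ m, (p m : ENNReal) * μ (f m ⁻¹' B \ B) := by
      rw [add_zero]; exact h1.trans h3'
    have h4 : ∑ m, (p m : ENNReal) * μ (f m ⁻¹' B \ B) = 0 :=
      ((ENNReal.add_right_inj hfin).mp h3).symm
    intro m
    exact (Finset.sum_eq_zero_iff.mp h4) m (Finset.mem_univ m)
  -- key: for measurable A, ∑ p m * μ (f m ⁻¹' A ∩ B) = μ (A ∩ B)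
  have hkey : ∀ A : Set X, MeasurableSet A →
      ∑ m, (p m : ENNReal) * μ (f m ⁻¹' A ∩ B) = μ (A ∩ B) := by
    intro A hA
    have h1 : μ (A ∩ B) = ∑ m, (p m : ENNReal) * μ (f m ⁻¹' (A ∩ B)) :=
      hexp (A ∩ B) (hA.inter hBm)
    rw [h1]
    refine Finset.sum_congr rfl fun m _ => ?_
    have heq : (p m : ENNReal) * μ (f m ⁻¹' (A ∩ B)) = (p m : ENNReal) * μ (f m ⁻¹' A ∩ B) := by
      apply le_antisymm
      · have hsub : f m ⁻¹' (A ∩ B) ⊆ (f m ⁻¹' A ∩ B) ∪ (f m ⁻¹' B \ B) := by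
          intro x hx
          rcases hx with ⟨hxA, hxB⟩
          by_cases h : x ∈ B
          · exact Or.inl ⟨hxA, h⟩
          · exact Or.inr ⟨hxB, h⟩
        calc (p m : ENNReal) * μ (f m ⁻¹' (A ∩ B))
            ≤ (p m : ENNReal) * (μ (f m ⁻¹' A ∩ B) + μ (f m ⁻¹' B \ B)) := by
              exact mul_le_mul_right (le_trans (measure_mono hsub) (measure_union_le _ _)) _
          _ = (p m : ENNReal) * μ (f m ⁻¹' A ∩ B) + (p m : ENNReal) * μ (f m ⁻¹' B \ B) :=
              mul_add _ _ _
          _ = (p m : ENNReal) * μ (f m ⁻¹' A ∩ B) := by rw [hzero m, add_zero]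
      · apply mul_le_mul_right
        apply measure_mono
        rw [Set.preimage_inter]
        exact Set.inter_subset_inter_right _ (hBsub m)
    exact heq.symm
  -- define ν
  set ν : Measure X := (μ B)⁻¹ • μ.restrict B with hν
  have hνapp : ∀ A : Set X, MeasurableSet A → ν A = (μ B)⁻¹ * μ (A ∩ B) := by
    intro A hA
    rw [hν, Measure.smul_apply, Measure.restrict_apply hA, smul_eq_mul]
  have hνprob : IsProbabilityMeasure ν := by
    constructor
    rw [hνapp univ MeasurableSet.univ, Set.univ_inter]
    exact ENNReal.inv_mul_cancel hc hfin
  have hνinv : (∑ m, (p m : ENNReal) • ν.map (f m)) = ν := by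
    ext A hA
    rw [Measure.coe_finset_sum, Finset.sum_apply, hνapp A hA, ← hkey A hA,
      Finset.mul_sum]
    refine Finset.sum_congr rfl fun m _ => ?_
    rw [Measure.smul_apply, Measure.map_apply (hfm m) hA, smul_eq_mul,
      hνapp _ ((hfm m) hA)]
    ring
  have := huniq ν hνprob hνinv
  have hB1 : ν B = 1 := by
    rw [hνapp B hBm, Set.inter_self]
    exact ENNReal.inv_mul_cancel hc hfin
  rw [← this, hB1]
end

section
/- Let F^1, ..., F^N be IFSs with probabilities on a compact metric space (X, d), all with common Lipschitz constant 0 ≤ l < 1. For σ ∈ Ω, k ≥ 1, K ∈ H(X) and ς ∈ P(X) define F_k(σ)(K) = ⋃_{i ∈ T, |i| = k} f^{σ(∅)}_{i_1} ∘ f^{σ(i_1)}_{i_2} ∘ ⋯ ∘ f^{σ(i_1 i_2 ... i_{k−1})}_{i_k}(K) and F̃_k(σ)(ς) = Σ_{i ∈ T, |i| = k} (p^{σ(∅)}_{i_1} · p^{σ(i_1)}_{i_2} · ⋯ · p^{σ(i_1...i_{k−1})}_{i_k}) · (f^{σ(∅)}_{i_1} ∘ ⋯ ∘ f^{σ(i_1...i_{k−1})}_{i_k})_*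 ς. Then both limits F(σ) = lim_{k→∞} F_k(σ)(K) in (H(X), d_H) and F̃(σ) = lim_{k→∞} F̃_k(σ)(ς) in (P(X), d_P) exist, are independent of K and ς respectively, the convergence is uniform in σ, K, and ς, and the resulting maps F : Ω → H(X) and F̃ : Ω → P(X) are continuous. -/
open Metric MeasureTheory Filter Set TopologicalSpace
def CodeTree (M N : ℕ) := List (Fin M) → Fin N

lemma codetree_exists_disagree {M N : ℕ} {ω κ : CodeTree M N} (h : ω ≠ κ) :
    ∃ n : ℕ, ∃ i : List (Fin M), i.length = n ∧ ω i ≠ κ i := by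
  obtain ⟨i, hi⟩ := Function.ne_iff.mp h
  exact ⟨i.length, i, rfl, hi⟩

open scoped Classical in
noncomputable def treeDist {M N : ℕ} (ω κ : CodeTree M N) : ℝ :=
  if h : ω = κ then 0
  else (1 / (M : ℝ)) ^ Nat.find (codetree_exists_disagree h)

section
open scoped Classical

variable {M N : ℕ}

lemma treeDist_nonneg (a b : CodeTree M N) : 0 ≤ treeDist a b := by
  unfold treeDist
  by_cases h : a = b
  · simp [h]
  · rw [dif_neg h]; positivity

lemma treeDist_comm (ω κ : CodeTree M N) : treeDist ω κ = treeDist κ ω := by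
  unfold treeDist
  by_cases h : ω = κ
  · subst h; simp
  · rw [dif_neg h, dif_neg (Ne.symm h)]
    congr 1
    exact le_antisymm
      (Nat.find_mono fun n => fun ⟨i, hl, hne⟩ => ⟨i, hl, hne.symm⟩)
      (Nat.find_mono fun n => fun ⟨i, hl, hne⟩ => ⟨i, hl, hne.symm⟩)

lemma treeDist_triangle [NeZero M] (x y z : CodeTree M N) :
    treeDist x y ≤ treeDist x z + treeDist z y := by
  have hMpos : (0 : ℕ) < M := Nat.pos_of_ne_zero (NeZero.ne M)
  have hM : (0 : ℝ) < 1 / (M : ℝ) := by positivity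
  have hM1 : (1 / (M : ℝ)) ≤ 1 := by
    rw [div_le_one (by exact_mod_cast hMpos)]
    exact_mod_cast hMpos
  by_cases hxy : x = y
  · rw [show treeDist x y = 0 by rw [hxy]; simp [treeDist]]
    exact add_nonneg (treeDist_nonneg _ _) (treeDist_nonneg _ _)
  by_cases hxz : x = z
  · subst hxz
    rw [show treeDist x x = 0 by simp [treeDist], zero_add]
  by_cases hzy : z = y
  · subst hzy
    rw [show treeDist z z = 0 by simp [treeDist], add_zero]
  -- all distinct
  have key : Nat.find (codetree_exists_disagree hxz) ≤ Nat.find (codetree_exists_disagree hxy)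
      ∨ Nat.find (codetree_exists_disagree hzy) ≤ Nat.find (codetree_exists_disagree hxy) := by
    obtain ⟨i, hlen, hne⟩ := Nat.find_spec (codetree_exists_disagree hxy)
    by_cases h : x i = z i
    · right
      exact Nat.find_le ⟨i, hlen, by rw [← h]; exact hne⟩
    · left
      exact Nat.find_le ⟨i, hlen, h⟩
  rw [treeDist, dif_neg hxy, treeDist, dif_neg hxz, treeDist, dif_neg hzy]
  rcases key with h | h
  · calc (1 / (M:ℝ)) ^ Nat.find (codetree_exists_disagree hxy)
        ≤ (1 / (M:ℝ)) ^ Nat.find (codetree_exists_disagree hxz) :=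
          pow_le_pow_of_le_one (le_of_lt hM) hM1 h
      _ ≤ _ := le_add_of_nonneg_right (by positivity)
  · calc (1 / (M:ℝ)) ^ Nat.find (codetree_exists_disagree hxy)
        ≤ (1 / (M:ℝ)) ^ Nat.find (codetree_exists_disagree hzy) :=
          pow_le_pow_of_le_one (le_of_lt hM) hM1 h
      _ ≤ _ := le_add_of_nonneg_left (by positivity)

lemma treeDist_eq_zero [NeZero M] {x y : CodeTree M N} (h : treeDist x y = 0) : x = y := by
  by_contra hne
  have hMpos : (0 : ℕ) < M := Nat.pos_of_ne_zero (NeZero.ne M)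
  have hM : (0 : ℝ) < 1 / (M : ℝ) := by positivity
  rw [treeDist, dif_neg hne] at h
  exact (pow_pos hM _).ne' h

end

noncomputable instance {M N : ℕ} [NeZero M] : MetricSpace (CodeTree M N) where
  dist := treeDist
  dist_self := fun ω => by simp [treeDist]
  dist_comm := treeDist_comm
  dist_triangle := fun a b c => treeDist_triangle a c b
  eq_of_dist_eq_zero := treeDist_eq_zero

/-- The composition `f^{σ(∅)}_{i₁} ∘ f^{σ(i₁)}_{i₂} ∘ ⋯ ∘ f^{σ(i₁…i_{k-1})}_{i_k}`
along the branch `i = i₁i₂…i_k` of the construction tree of `σ`. -/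
def treeComp {X : Type*} {M N : ℕ} (f : Fin N → Fin M → X → X) :
    List (Fin M) → CodeTree M N → X → X
  | [], _ => id
  | m :: t, σ => f (σ []) m ∘ treeComp f t (fun j => σ (m :: j))

/-- The product `p^{σ(∅)}_{i₁} ⋯ p^{σ(i₁…i_{k-1})}_{i_k}` of the probabilities
along the branch `i` of the construction tree of `σ`. -/
def treeProb {M N : ℕ} (p : Fin N → Fin M → NNReal) :
    List (Fin M) → CodeTree M N → NNReal
  | [], _ => 1
  | m :: t, σ => p (σ []) m * treeProb p t (fun j => σ (m :: j))

/-- The Monge–Kantorovich metric on measures. -/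
noncomputable def MKdist {Y : Type*} [MeasurableSpace Y] [MetricSpace Y]
    (μ ν : Measure Y) : ℝ :=
  ⨆ f : {g : Y → ℝ // LipschitzWith 1 g}, ((∫ x, f.1 x ∂μ) - (∫ x, f.1 x ∂ν))

/-!
Any two level-`k'` approximations with `k ≤ k'`, whatever the initial set or measure, share their
first `k` levels: both are built from the images of the maps
`f^{σ(∅)}_{i₁} ∘ ⋯ ∘ f^{σ(i₁…i_{k-1})}_{i_k}`, which are `l^k`-Lipschitz, so the two
approximations are within `l^k · diam X` of each other. For sets this makes the level-`k` sets
Cauchy in the complete space `H(X)`. For measures it makes the level-`k` averages of every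
continuous function converge; the limit is a positive normalised functional on `C(X)`, which the
Riesz–Markov–Kakutani theorem represents by a probability measure. Since level-`k` approximations
only see the values of `σ` on words of length `< k`, the limits depend continuously on `σ`.
-/

open scoped Topology CompactlySupported

instance {α : Type*} [Fintype α] (k : ℕ) : Fintype {i : List α // i.length = k} :=
  inferInstanceAs (Fintype (List.Vector α k))

def List.consLengthEquiv (α : Type*) (k : ℕ) :
    α × {i : List α // i.length = k} ≃ {i : List α // i.length = k + 1} where
  toFun x := ⟨x.1 :: x.2.1, by simp [x.2.2]⟩
  invFun
    | ⟨[], h⟩ => absurd h (by simp)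
    | ⟨a :: i, h⟩ => (a, ⟨i, by simpa using h⟩)
  left_inv _ := rfl
  right_inv
    | ⟨[], h⟩ => absurd h (by simp)
    | ⟨_ :: _, _⟩ => rfl

lemma List.sum_length_eq_succ {α β : Type*} [Fintype α] [AddCommMonoid β] (k : ℕ)
    (g : List α → β) :
    ∑ i : {i : List α // i.length = k + 1}, g i =
      ∑ a, ∑ i : {i : List α // i.length = k}, g (a :: i) := by
  rw [← (List.consLengthEquiv α k).sum_comp, Fintype.sum_prod_type]
  rfl

lemma List.sum_length_eq_zero {α β : Type*} [Fintype α] [AddCommMonoid β]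
    (g : List α → β) : ∑ i : {i : List α // i.length = 0}, g i = g [] := by
  refine Fintype.sum_eq_single (⟨[], rfl⟩ : {i : List α // i.length = 0}) fun i hne => ?_
  exact absurd (Subtype.ext (List.eq_nil_of_length_eq_zero i.2)) hne

lemma tendsto_pow_mul_atTop_nhds_zero {l : NNReal} (hl : l < 1) (C : ℝ) :
    Tendsto (fun k : ℕ => (l : ℝ) ^ k * C) atTop (𝓝 0) := by
  simpa using (tendsto_pow_atTop_nhds_zero_of_lt_one l.2 hl).mul_const C

lemma exists_forall_ge_pow_mul_lt {l : NNReal} (hl : l < 1) (C : ℝ) {ε : ℝ} (hε : 0 < ε) :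
    ∃ k₀ : ℕ, ∀ k ≥ k₀, (l : ℝ) ^ k * C < ε :=
  eventually_atTop.mp ((tendsto_pow_mul_atTop_nhds_zero hl C).eventually (gt_mem_nhds hε))

namespace CodeTree

variable {M N : ℕ}

lemma eq_of_dist_lt [NeZero M] {σ σ' : CodeTree M N} {k : ℕ}
    (h : dist σ σ' < (1 / (M : ℝ)) ^ k) {t : List (Fin M)} (ht : t.length < k) :
    σ t = σ' t := by
  classical
  by_contra hne
  have hσ : σ ≠ σ' := fun h => hne (h ▸ rfl)
  have hdist : dist σ σ' = (1 / (M : ℝ)) ^ Nat.find (codetree_exists_disagree hσ) :=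
    dif_neg hσ
  have hM : (1 : ℝ) ≤ M := by exact_mod_cast Nat.one_le_iff_ne_zero.mpr (NeZero.ne M)
  have hfind : Nat.find (codetree_exists_disagree hσ) ≤ k :=
    (Nat.find_le ⟨t, rfl, hne⟩).trans ht.le
  refine (h.trans_le ?_).false
  rw [hdist]
  exact pow_le_pow_of_le_one (by positivity) (div_le_one_of_le₀ hM (by positivity)) hfind

lemma exists_pos_forall_dist_lt_of_agree [NeZero M]
    {g : CodeTree M N → CodeTree M N → ℝ} {l : NNReal} (hl : l < 1) {C : ℝ}
    (hg : ∀ (k : ℕ) (σ σ' : CodeTree M N), (∀ t : List (Fin M), t.length < k → σ t = σ' t) →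
      g σ σ' ≤ l ^ k * C)
    (σ : CodeTree M N) {ε : ℝ} (hε : 0 < ε) :
    ∃ δ > 0, ∀ σ', dist σ' σ < δ → g σ' σ < ε := by
  obtain ⟨k, hk⟩ := exists_forall_ge_pow_mul_lt hl C hε
  have hM : (0 : ℝ) < M := Nat.cast_pos.mpr (NeZero.pos M)
  refine ⟨(1 / (M : ℝ)) ^ k, by positivity, fun σ' hσ' => ?_⟩
  exact (hg k σ' σ fun t ht => eq_of_dist_lt hσ' ht).trans_lt (hk k le_rfl)

end CodeTree

section TreeMaps

variable {X : Type*} {M N : ℕ}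

lemma treeComp_congr (f : Fin N → Fin M → X → X) {i : List (Fin M)} {σ σ' : CodeTree M N}
    (h : ∀ t : List (Fin M), t.length < i.length → σ t = σ' t) :
    treeComp f i σ = treeComp f i σ' := by
  induction i generalizing σ σ' with
  | nil => rfl
  | cons m i ih =>
    simp only [treeComp, h [] (by simp)]
    rw [ih fun t ht => h (m :: t) (by simpa using ht)]

lemma treeProb_congr (p : Fin N → Fin M → NNReal) {i : List (Fin M)} {σ σ' : CodeTree M N}
    (h : ∀ t : List (Fin M), t.length < i.length → σ t = σ' t) :
    treeProb p i σ = treeProb p i σ' := by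
  induction i generalizing σ σ' with
  | nil => rfl
  | cons m i ih =>
    simp only [treeProb, h [] (by simp)]
    rw [ih fun t ht => h (m :: t) (by simpa using ht)]

lemma treeComp_append (f : Fin N → Fin M → X → X) (i j : List (Fin M)) (σ : CodeTree M N) :
    treeComp f (i ++ j) σ = treeComp f i σ ∘ treeComp f j (fun t => σ (i ++ t)) := by
  induction i generalizing σ with
  | nil => rfl
  | cons m i ih =>
    show f (σ []) m ∘ treeComp f (i ++ j) (fun t => σ (m :: t)) = _
    rw [ih (fun t => σ (m :: t))]
    rfl

lemma sum_treeProb (p : Fin N → Fin M → NNReal) (hp : ∀ n, ∑ m, p n m = 1) (k : ℕ)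
    (σ : CodeTree M N) : ∑ i : {i : List (Fin M) // i.length = k}, treeProb p i.1 σ = 1 := by
  induction k generalizing σ with
  | zero => exact List.sum_length_eq_zero (fun i => treeProb p i σ)
  | succ k ih =>
    rw [List.sum_length_eq_succ k (fun i => treeProb p i σ)]
    simp only [treeProb, ← Finset.mul_sum]
    exact (Finset.sum_congr rfl fun m _ => by rw [ih (fun j => σ (m :: j)), mul_one]).trans (hp _)

lemma lipschitzWith_treeComp [PseudoEMetricSpace X] (f : Fin N → Fin M → X → X) {l : NNReal}
    (hf : ∀ n m, LipschitzWith l (f n m)) (i : List (Fin M)) (σ : CodeTree M N) :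
    LipschitzWith (l ^ i.length) (treeComp f i σ) := by
  induction i generalizing σ with
  | nil => exact LipschitzWith.id
  | cons m i ih => simpa [pow_succ', treeComp] using (hf (σ []) m).comp (ih _)

end TreeMaps

lemma Metric.hausdorffDist_le_of_forall_inter_nonempty {X ι : Type*} [PseudoMetricSpace X]
    {s t : Set X} {P : ι → Set X} {r : ℝ} (hr : 0 ≤ r)
    (hP : ∀ i, ∀ x ∈ P i, ∀ y ∈ P i, dist x y ≤ r) (hs : s ⊆ ⋃ i, P i) (ht : t ⊆ ⋃ i, P i)
    (hsP : ∀ i, (s ∩ P i).Nonempty) (htP : ∀ i, (t ∩ P i).Nonempty) :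
    hausdorffDist s t ≤ r := by
  have near {s t : Set X} (hs : s ⊆ ⋃ i, P i) (htP : ∀ i, (t ∩ P i).Nonempty) :
      ∀ x ∈ s, ∃ y ∈ t, dist x y ≤ r := fun x hx => by
    obtain ⟨i, hxi⟩ := Set.mem_iUnion.mp (hs hx)
    obtain ⟨y, hyt, hyi⟩ := htP i
    exact ⟨y, hyt, hP i x hxi y hyi⟩
  exact hausdorffDist_le_of_mem_dist hr (near hs htP) (near ht hsP)

section LevelSets

variable {X : Type*} {M N : ℕ} (f : Fin N → Fin M → X → X)

def levelSet (σ : CodeTree M N) (k : ℕ) (K : Set X) : Set X :=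
  ⋃ (i : List (Fin M)) (_ : i.length = k), treeComp f i σ '' K

lemma levelSet_congr {σ σ' : CodeTree M N} {k : ℕ}
    (h : ∀ t : List (Fin M), t.length < k → σ t = σ' t) (K : Set X) :
    levelSet f σ k K = levelSet f σ' k K :=
  Set.iUnion₂_congr fun i hi => by rw [treeComp_congr f (hi ▸ h)]

lemma levelSet_nonempty [NeZero M] (σ : CodeTree M N) (k : ℕ) {K : Set X} (hK : K.Nonempty) :
    (levelSet f σ k K).Nonempty := by
  obtain ⟨x, hx⟩ := hK
  exact ⟨_, Set.mem_biUnion (List.length_replicate (n := k) (a := 0)) (Set.mem_image_of_mem _ hx)⟩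

lemma levelSet_subset_iUnion_range (σ : CodeTree M N) {k k' : ℕ} (hk : k ≤ k') (K : Set X) :
    levelSet f σ k' K ⊆ ⋃ i : {i : List (Fin M) // i.length = k}, Set.range (treeComp f i.1 σ) := by
  rintro _ ⟨_, ⟨i, rfl⟩, ⟨_, ⟨hi, rfl⟩, x, -, rfl⟩⟩
  refine Set.mem_iUnion.mpr ⟨⟨i.take k, by simp [hi, hk]⟩, ?_⟩
  have hsplit := treeComp_append f (i.take k) (i.drop k) σ
  rw [List.take_append_drop] at hsplit
  rw [hsplit]
  exact Set.mem_range_self _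

lemma levelSet_inter_range_nonempty [NeZero M] (σ : CodeTree M N) {k k' : ℕ} (hk : k ≤ k')
    {K : Set X} (hK : K.Nonempty) (i : {i : List (Fin M) // i.length = k}) :
    (levelSet f σ k' K ∩ Set.range (treeComp f i.1 σ)).Nonempty := by
  obtain ⟨x, hx⟩ := hK
  set j := i.1 ++ List.replicate (k' - k) 0
  have hj : j.length = k' := by simp [j, i.2, hk]
  refine ⟨treeComp f j σ x, Set.mem_biUnion hj (Set.mem_image_of_mem _ hx), ?_⟩
  rw [treeComp_append]
  exact Set.mem_range_self _

variable [PseudoMetricSpace X] {l : NNReal} (hf : ∀ n m, LipschitzWith l (f n m))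
include hf

lemma dist_treeComp_le [BoundedSpace X] (i : List (Fin M)) (σ : CodeTree M N) (x y : X) :
    dist (treeComp f i σ x) (treeComp f i σ y) ≤ l ^ i.length * diam (univ : Set X) := by
  refine ((lipschitzWith_treeComp f hf i σ).dist_le_mul x y).trans ?_
  push_cast
  gcongr
  exact dist_le_diam_of_mem BoundedSpace.bounded_univ (mem_univ x) (mem_univ y)

lemma isCompact_levelSet (σ : CodeTree M N) (k : ℕ) {K : Set X} (hK : IsCompact K) :
    IsCompact (levelSet f σ k K) :=
  (List.finite_length_eq (Fin M) k).isCompact_biUnion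
    fun i _ => hK.image (lipschitzWith_treeComp f hf i σ).continuous

lemma hausdorffDist_levelSet_le [NeZero M] [BoundedSpace X] (σ : CodeTree M N) {k k' : ℕ}
    (hk : k ≤ k') {K K' : Set X} (hK : K.Nonempty) (hK' : K'.Nonempty) :
    hausdorffDist (levelSet f σ k K) (levelSet f σ k' K') ≤ l ^ k * diam (univ : Set X) := by
  refine Metric.hausdorffDist_le_of_forall_inter_nonempty (by positivity) ?_
    (levelSet_subset_iUnion_range f σ le_rfl K) (levelSet_subset_iUnion_range f σ hk K')
    (levelSet_inter_range_nonempty f σ le_rfl hK) (levelSet_inter_range_nonempty f σ hk hK')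
  rintro i _ ⟨x, rfl⟩ _ ⟨y, rfl⟩
  simpa [i.2] using dist_treeComp_le f hf i.1 σ x y

end LevelSets

section LimitSet

variable {X : Type*} [MetricSpace X] {M N : ℕ} [NeZero M]
  (f : Fin N → Fin M → X → X) {l : NNReal} (hf : ∀ n m, LipschitzWith l (f n m))
include hf

def levelCompacts (σ : CodeTree M N) (k : ℕ) (K : NonemptyCompacts X) : NonemptyCompacts X :=
  ⟨⟨levelSet f σ k K, isCompact_levelSet f hf σ k K.isCompact⟩, levelSet_nonempty f σ k K.nonempty⟩

lemma exists_limitSet [BoundedSpace X] [CompleteSpace X] [Nonempty X] (hl : l < 1)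
    (σ : CodeTree M N) :
    ∃ A : NonemptyCompacts X, ∀ (k : ℕ) (K : NonemptyCompacts X),
      dist (levelCompacts f hf σ k K) A ≤ l ^ k * diam (univ : Set X) := by
  have hlevel : ∀ {k k'} (K K' : NonemptyCompacts X), k ≤ k' →
      dist (levelCompacts f hf σ k K) (levelCompacts f hf σ k' K') ≤
        l ^ k * diam (univ : Set X) := fun K K' hk => by
    rw [NonemptyCompacts.dist_eq]
    exact hausdorffDist_levelSet_le f hf σ hk K.nonempty K'.nonempty
  obtain ⟨x₀⟩ := ‹Nonempty X›
  let S (k : ℕ) := levelCompacts f hf σ k {x₀}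
  have hS : CauchySeq S := cauchySeq_of_le_tendsto_0' _
    (fun k k' hk => hlevel {x₀} {x₀} hk) (tendsto_pow_mul_atTop_nhds_zero hl _)
  obtain ⟨A, hA⟩ := cauchySeq_tendsto_of_complete hS
  refine ⟨A, fun k K => le_of_tendsto (tendsto_const_nhds.dist hA) ?_⟩
  exact eventually_atTop.mpr ⟨k, fun k' hk => hlevel K {x₀} hk⟩

lemma continuous_of_forall_dist_levelCompacts_le [Nonempty X] (hl : l < 1)
    {FS : CodeTree M N → NonemptyCompacts X}
    (hFS : ∀ σ k K, dist (levelCompacts f hf σ k K) (FS σ) ≤ l ^ k * diam (univ : Set X)) :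
    Continuous FS := by
  obtain ⟨x₀⟩ := ‹Nonempty X›
  refine Metric.continuous_iff.mpr fun σ ε hε =>
    CodeTree.exists_pos_forall_dist_lt_of_agree hl (C := 2 * diam (univ : Set X))
      (g := fun σ σ' => dist (FS σ) (FS σ')) (fun k σ σ' hσ => ?_) σ hε
  have hlevel : levelCompacts f hf σ k {x₀} = levelCompacts f hf σ' k {x₀} :=
    NonemptyCompacts.ext (levelSet_congr f hσ _)
  calc dist (FS σ) (FS σ')
      ≤ dist (levelCompacts f hf σ k {x₀}) (FS σ)
          + dist (levelCompacts f hf σ' k {x₀}) (FS σ') := by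
        rw [hlevel]; exact dist_triangle_left _ _ _
    _ ≤ l ^ k * (2 * diam (univ : Set X)) := by linarith [hFS σ k {x₀}, hFS σ' k {x₀}]

end LimitSet

lemma abs_sum_mul_le_of_sum_eq_one {ι : Type*} [Fintype ι] {w : ι → NNReal} (hw : ∑ i, w i = 1)
    {a : ι → ℝ} {c : ℝ} (ha : ∀ i, |a i| ≤ c) : |∑ i, (w i : ℝ) * a i| ≤ c := by
  calc |∑ i, (w i : ℝ) * a i|
      ≤ ∑ i, (w i : ℝ) * c := (Finset.abs_sum_le_sum_abs _ _).trans <| Finset.sum_le_sum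
        fun i _ => by rw [abs_mul, NNReal.abs_eq]; exact mul_le_mul_of_nonneg_left (ha i) (w i).2
    _ = c := by rw [← Finset.sum_mul, ← NNReal.coe_sum, hw, NNReal.coe_one, one_mul]

section TreeAverage

variable {X : Type*} {M N : ℕ} (f : Fin N → Fin M → X → X) (p : Fin N → Fin M → NNReal)

def treeAverage (k : ℕ) (σ : CodeTree M N) (φ : X → ℝ) (x : X) : ℝ :=
  ∑ i : {i : List (Fin M) // i.length = k}, (treeProb p i.1 σ : ℝ) * φ (treeComp f i.1 σ x)

lemma treeAverage_zero (σ : CodeTree M N) (φ : X → ℝ) (x : X) :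
    treeAverage f p 0 σ φ x = φ x := by
  rw [treeAverage, List.sum_length_eq_zero (fun i => (treeProb p i σ : ℝ) * φ (treeComp f i σ x))]
  simp [treeProb, treeComp]

lemma treeAverage_succ (k : ℕ) (σ : CodeTree M N) (φ : X → ℝ) (x : X) :
    treeAverage f p (k + 1) σ φ x =
      ∑ m, (p (σ []) m : ℝ) * treeAverage f p k (fun j => σ (m :: j)) (φ ∘ f (σ []) m) x := by
  rw [treeAverage, List.sum_length_eq_succ k (fun i => (treeProb p i σ : ℝ) * φ (treeComp f i σ x))]
  simp only [treeAverage, Finset.mul_sum, treeProb, treeComp, NNReal.coe_mul, Function.comp_apply,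
    mul_assoc]

lemma treeAverage_congr {k : ℕ} {σ σ' : CodeTree M N}
    (h : ∀ t : List (Fin M), t.length < k → σ t = σ' t) (φ : X → ℝ) (x : X) :
    treeAverage f p k σ φ x = treeAverage f p k σ' φ x := by
  refine Finset.sum_congr rfl fun i _ => ?_
  rw [treeProb_congr p (i.2 ▸ h), treeComp_congr f (i.2 ▸ h)]

variable {p}

lemma treeAverage_nonneg {k : ℕ} (σ : CodeTree M N) {φ : X → ℝ} (hφ : 0 ≤ φ) (x : X) :
    0 ≤ treeAverage f p k σ φ x :=
  Finset.sum_nonneg fun i _ => mul_nonneg (treeProb p i.1 σ).2 (hφ _)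

lemma treeAverage_const (hp : ∀ n, ∑ m, p n m = 1) (k : ℕ) (σ : CodeTree M N) (c : ℝ) (x : X) :
    treeAverage f p k σ (fun _ => c) x = c := by
  rw [treeAverage, ← Finset.sum_mul, ← NNReal.coe_sum, sum_treeProb p hp, NNReal.coe_one, one_mul]

lemma continuous_treeAverage [PseudoMetricSpace X] {l : NNReal}
    (hf : ∀ n m, LipschitzWith l (f n m)) (k : ℕ) (σ : CodeTree M N) {φ : X → ℝ}
    (hφ : Continuous φ) : Continuous (treeAverage f p k σ φ) :=
  continuous_finsetSum _ fun i _ =>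
    continuous_const.mul (hφ.comp (lipschitzWith_treeComp f hf i.1 σ).continuous)

lemma abs_treeAverage_sub_treeAverage_le [PseudoMetricSpace X] [BoundedSpace X] {l : NNReal}
    (hf : ∀ n m, LipschitzWith l (f n m)) (hp : ∀ n, ∑ m, p n m = 1) {k k' : ℕ} (hk : k ≤ k')
    (σ : CodeTree M N) {φ : X → ℝ} {c : ℝ}
    (hφ : ∀ x y, dist x y ≤ l ^ k * diam (univ : Set X) → |φ x - φ y| ≤ c) (x y : X) :
    |treeAverage f p k σ φ x - treeAverage f p k' σ φ y| ≤ c := by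
  induction k generalizing k' σ φ with
  | zero =>
    rw [treeAverage_zero, ← treeAverage_const f hp k' σ (φ x) y, treeAverage, treeAverage,
      ← Finset.sum_sub_distrib]
    simp only [← mul_sub]
    refine abs_sum_mul_le_of_sum_eq_one (sum_treeProb p hp k' σ) fun i => hφ _ _ ?_
    simpa using dist_le_diam_of_mem BoundedSpace.bounded_univ (mem_univ _) (mem_univ _)
  | succ k ih =>
    obtain ⟨k', rfl⟩ : ∃ j, k' = j + 1 := ⟨k' - 1, by omega⟩
    rw [treeAverage_succ, treeAverage_succ, ← Finset.sum_sub_distrib]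
    simp only [← mul_sub]
    refine abs_sum_mul_le_of_sum_eq_one (hp _) fun m => ih (by omega) _ fun x y hxy => hφ _ _ ?_
    calc dist (f (σ []) m x) (f (σ []) m y) ≤ l * dist x y := (hf _ m).dist_le_mul x y
      _ ≤ l * (l ^ k * diam (univ : Set X)) := by gcongr
      _ = l ^ (k + 1) * diam (univ : Set X) := by ring

end TreeAverage

section LimitMeasure

variable {X : Type*} [MetricSpace X] {M N : ℕ} (f : Fin N → Fin M → X → X)
  {p : Fin N → Fin M → NNReal} {l : NNReal} (hl : l < 1) (hf : ∀ n m, LipschitzWith l (f n m))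
  (hp : ∀ n, ∑ m, p n m = 1)
include hl hf hp

lemma exists_tendsto_treeAverage [BoundedSpace X] (σ : CodeTree M N) {φ : X → ℝ}
    (hφ : UniformContinuous φ) (x : X) :
    ∃ a, Tendsto (fun k => treeAverage f p k σ φ x) atTop (𝓝 a) := by
  refine cauchySeq_tendsto_of_complete (Metric.cauchySeq_iff'.mpr fun ε hε => ?_)
  obtain ⟨δ, hδ, hφδ⟩ := Metric.uniformContinuous_iff.mp hφ (ε / 2) (half_pos hε)
  obtain ⟨k, hk⟩ := exists_forall_ge_pow_mul_lt hl (diam (univ : Set X)) hδ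
  refine ⟨k, fun k' hk' => ?_⟩
  rw [Real.dist_eq, abs_sub_comm]
  refine (abs_treeAverage_sub_treeAverage_le f hf hp hk' σ (fun y z hyz => ?_) x x).trans_lt
    (half_lt_self hε)
  exact (Real.dist_eq _ _ ▸ hφδ (hyz.trans_lt (hk k le_rfl))).le

lemma exists_limitMeasure [CompactSpace X] [Nonempty X] [MeasurableSpace X] [BorelSpace X]
    (σ : CodeTree M N) :
    ∃ μ : Measure X, IsProbabilityMeasure μ ∧ ∀ (k : ℕ) (φ : X → ℝ), LipschitzWith 1 φ →
      ∀ x, |treeAverage f p k σ φ x - ∫ y, φ y ∂μ| ≤ l ^ k * diam (univ : Set X) := by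
  obtain ⟨x₀⟩ := ‹Nonempty X›
  set Λ₀ : (X → ℝ) → ℝ := fun φ => limUnder atTop fun k => treeAverage f p k σ φ x₀
  have hlim (φ : X → ℝ) (hφ : Continuous φ) :
      Tendsto (fun k => treeAverage f p k σ φ x₀) atTop (𝓝 (Λ₀ φ)) :=
    tendsto_nhds_limUnder <| exists_tendsto_treeAverage f hl hf hp σ
      (CompactSpace.uniformContinuous_of_continuous hφ) x₀
  let avg (k : ℕ) : C_c(X, ℝ) →ₗ[ℝ] ℝ :=
    { toFun φ := treeAverage f p k σ φ x₀
      map_add' φ ψ := by simp [treeAverage, mul_add, Finset.sum_add_distrib]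
      map_smul' c φ := by simp [treeAverage, Finset.mul_sum, mul_left_comm] }
  let Λ : C_c(X, ℝ) →ₚ[ℝ] ℝ :=
    PositiveLinearMap.mk₀ (linearMapOfTendsto (fun φ => Λ₀ φ) avg
      (tendsto_pi_nhds.mpr fun φ => hlim φ φ.continuous))
      fun φ hφ => ge_of_tendsto' (hlim φ φ.continuous) fun k => treeAverage_nonneg f σ hφ x₀
  have hΛ (φ : X → ℝ) (hφ : Continuous φ) : ∫ y, φ y ∂(RealRMK.rieszMeasure Λ) = Λ₀ φ :=
    RealRMK.integral_rieszMeasure Λ (CompactlySupportedContinuousMap.continuousMapEquiv ⟨φ, hφ⟩)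
  refine ⟨RealRMK.rieszMeasure Λ, ?_, fun k φ hφ x => ?_⟩
  · have h1 := hΛ (fun _ => 1) continuous_const
    rw [integral_const, smul_eq_mul, mul_one] at h1
    rw [isProbabilityMeasure_iff_real, h1]
    exact tendsto_nhds_unique (hlim _ continuous_const)
      (by simp only [treeAverage_const f hp]; exact tendsto_const_nhds)
  · rw [hΛ φ hφ.continuous]
    refine le_of_tendsto ((tendsto_const_nhds.sub (hlim φ hφ.continuous)).abs)
      (eventually_atTop.mpr ⟨k, fun k' hk => abs_treeAverage_sub_treeAverage_le f hf hp hk σ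
        (fun y z hyz => ?_) x x₀⟩)
    rw [← Real.dist_eq]
    exact (by simpa using hφ.dist_le_mul y z : dist (φ y) (φ z) ≤ dist y z).trans hyz

end LimitMeasure

lemma MKdist_le {Y : Type*} [MeasurableSpace Y] [MetricSpace Y] {μ ν : Measure Y} {r : ℝ}
    (hr : 0 ≤ r) (h : ∀ φ : Y → ℝ, LipschitzWith 1 φ → ∫ y, φ y ∂μ - ∫ y, φ y ∂ν ≤ r) :
    MKdist μ ν ≤ r :=
  Real.iSup_le (fun φ => h φ.1 φ.2) hr

section LevelMeasure

variable {X : Type*} [MetricSpace X] [CompactSpace X] [MeasurableSpace X] [BorelSpace X]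
  {M N : ℕ} (f : Fin N → Fin M → X → X) (p : Fin N → Fin M → NNReal)

noncomputable def levelMeasure (σ : CodeTree M N) (k : ℕ) (ς : Measure X) : Measure X :=
  Measure.sum fun i : {i : List (Fin M) // i.length = k} =>
    (treeProb p i.1 σ : ENNReal) • ς.map (treeComp f i.1 σ)

variable {f} {l : NNReal} (hf : ∀ n m, LipschitzWith l (f n m))
include hf

lemma integral_levelMeasure (σ : CodeTree M N) (k : ℕ) (ς : Measure X) [IsFiniteMeasure ς]
    {φ : X → ℝ} (hφ : Continuous φ) :
    ∫ y, φ y ∂levelMeasure f p σ k ς = ∫ x, treeAverage f p k σ φ x ∂ς := by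
  have hT (i : {i : List (Fin M) // i.length = k}) : Continuous (treeComp f i.1 σ) :=
    (lipschitzWith_treeComp f hf i.1 σ).continuous
  have hint (i : {i : List (Fin M) // i.length = k}) : Integrable φ (ς.map (treeComp f i.1 σ)) :=
    hφ.integrable_of_hasCompactSupport (HasCompactSupport.of_compactSpace _)
  have hint' (i : {i : List (Fin M) // i.length = k}) :
      Integrable (fun x => (treeProb p i.1 σ : ℝ) * φ (treeComp f i.1 σ x)) ς :=
    ((hφ.comp (hT i)).integrable_of_hasCompactSupport
      (HasCompactSupport.of_compactSpace _)).const_mul _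
  unfold treeAverage
  rw [levelMeasure, Measure.sum_fintype,
    integral_finsetSum_measure fun i _ => (hint i).smul_measure ENNReal.coe_ne_top,
    integral_finsetSum _ fun i _ => hint' i]
  refine Finset.sum_congr rfl fun i _ => ?_
  rw [integral_smul_measure, integral_map (hT i).aemeasurable hφ.aestronglyMeasurable,
    integral_const_mul]
  rfl

variable {p}

lemma MKdist_levelMeasure_le {σ : CodeTree M N} {k : ℕ} {μ : Measure X} {r : ℝ} (hr : 0 ≤ r)
    (hμ : ∀ φ : X → ℝ, LipschitzWith 1 φ → ∀ x, |treeAverage f p k σ φ x - ∫ y, φ y ∂μ| ≤ r)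
    (ς : Measure X) [IsProbabilityMeasure ς] :
    MKdist (levelMeasure f p σ k ς) μ ≤ r := by
  refine MKdist_le hr fun φ hφ => ?_
  rw [integral_levelMeasure p hf σ k ς hφ.continuous]
  have hmono : ∫ x, treeAverage f p k σ φ x ∂ς ≤ ∫ _, (∫ y, φ y ∂μ + r) ∂ς :=
    integral_mono ((continuous_treeAverage f hf k σ hφ.continuous).integrable_of_hasCompactSupport
      (HasCompactSupport.of_compactSpace _)) (integrable_const _)
      fun x => by linarith [(abs_le.mp (hμ φ hφ x)).2]
  simp only [integral_const, probReal_univ, one_smul] at hmono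
  linarith

end LevelMeasure

lemma MKdist_le_of_agree {X : Type*} [MetricSpace X] [Nonempty X] [MeasurableSpace X] {M N : ℕ}
    {f : Fin N → Fin M → X → X} {p : Fin N → Fin M → NNReal} {k : ℕ} {σ σ' : CodeTree M N}
    (h : ∀ t : List (Fin M), t.length < k → σ t = σ' t) {μ μ' : Measure X} {r : ℝ} (hr : 0 ≤ r)
    (hμ : ∀ φ : X → ℝ, LipschitzWith 1 φ → ∀ x, |treeAverage f p k σ φ x - ∫ y, φ y ∂μ| ≤ r)
    (hμ' : ∀ φ : X → ℝ, LipschitzWith 1 φ → ∀ x, |treeAverage f p k σ' φ x - ∫ y, φ y ∂μ'| ≤ r) :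
    MKdist μ μ' ≤ 2 * r := by
  obtain ⟨x₀⟩ := ‹Nonempty X›
  refine MKdist_le (by positivity) fun φ hφ => ?_
  have h₁ := abs_le.mp (hμ φ hφ x₀)
  have h₂ := abs_le.mp (hμ' φ hφ x₀)
  rw [treeAverage_congr f p h] at h₁
  linarith [h₁.1, h₂.2]

theorem stmt_8_general {X : Type*} [MetricSpace X] [CompactSpace X] [Nonempty X]
    [MeasurableSpace X] [BorelSpace X]
    {M N : ℕ} [NeZero M]
    (f : Fin N → Fin M → X → X) (l : NNReal) (hl : l < 1)
    (hf : ∀ n m, LipschitzWith l (f n m))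
    (p : Fin N → Fin M → NNReal) (hp : ∀ n, ∑ m, p n m = 1) :
    ∃ (FS : CodeTree M N → NonemptyCompacts X) (FM : CodeTree M N → Measure X),
      (∀ σ, IsProbabilityMeasure (FM σ)) ∧
      (∀ ε : ℝ, 0 < ε → ∃ k₀ : ℕ, ∀ k ≥ k₀, ∀ (σ : CodeTree M N) (K : Set X),
        K.Nonempty → IsCompact K →
        hausdorffDist (⋃ (i : List (Fin M)) (_ : i.length = k), treeComp f i σ '' K)
          (FS σ : Set X) < ε) ∧
      (∀ ε : ℝ, 0 < ε → ∃ k₀ : ℕ, ∀ k ≥ k₀, ∀ (σ : CodeTree M N) (ς : Measure X),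
        IsProbabilityMeasure ς →
        MKdist (Measure.sum fun i : {i : List (Fin M) // i.length = k} =>
            (treeProb p i.1 σ : ENNReal) • ς.map (treeComp f i.1 σ)) (FM σ) < ε) ∧
      Continuous FS ∧
      (∀ (σ : CodeTree M N) (ε : ℝ), 0 < ε → ∃ δ : ℝ, 0 < δ ∧
        ∀ σ' : CodeTree M N, dist σ' σ < δ → MKdist (FM σ') (FM σ) < ε) := by
  set D := diam (univ : Set X)
  choose FS hFS using exists_limitSet f hf hl
  choose FM hFMprob hFM using exists_limitMeasure f hl hf hp
  refine ⟨FS, FM, hFMprob, fun ε hε => ?_, fun ε hε => ?_,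
    continuous_of_forall_dist_levelCompacts_le f hf hl hFS, fun σ ε hε => ?_⟩
  · obtain ⟨k₀, hk₀⟩ := exists_forall_ge_pow_mul_lt hl D hε
    exact ⟨k₀, fun k hk σ K hK hKc => (hFS σ k ⟨⟨K, hKc⟩, hK⟩).trans_lt (hk₀ k hk)⟩
  · obtain ⟨k₀, hk₀⟩ := exists_forall_ge_pow_mul_lt hl D hε
    exact ⟨k₀, fun k hk σ ς _ =>
      (MKdist_levelMeasure_le hf (by positivity) (hFM σ k) ς).trans_lt (hk₀ k hk)⟩
  · exact CodeTree.exists_pos_forall_dist_lt_of_agree hl (C := 2 * D)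
      (g := fun σ σ' => MKdist (FM σ) (FM σ'))
      (fun k σ σ' h => (MKdist_le_of_agree h (by positivity) (hFM σ k) (hFM σ' k)).trans_eq
        (by ring)) σ hε

/-- **Random fractal sets and measures exist.** Given a superIFS of `N` IFSs on a compact
metric space, for each code tree `σ ∈ Ω` the level-`k` set approximations
`F_k(σ)(K) = ⋃_{|i|=k} f^{σ(∅)}_{i₁}∘⋯∘f^{σ(i₁…i_{k-1})}_{i_k}(K)` converge in the
Hausdorff metric to a limit `FS σ` independent of `K`, the level-`k` measure
approximations converge in the Monge–Kantorovich metric to a limit `FM σ` independent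
of `ς`, in both cases uniformly in all arguments, and the limit maps
`FS : Ω → H(X)`, `FM : Ω → P(X)` are continuous. -/
theorem stmt_8 {X : Type*} [MetricSpace X] [CompactSpace X] [Nonempty X]
    [MeasurableSpace X] [BorelSpace X]
    {M N : ℕ} [NeZero M] (hN : 0 < N)
    (f : Fin N → Fin M → X → X) (l : NNReal) (hl : l < 1)
    (hf : ∀ n m, LipschitzWith l (f n m))
    (p : Fin N → Fin M → NNReal) (hp : ∀ n, ∑ m, p n m = 1) :
    ∃ (FS : CodeTree M N → NonemptyCompacts X) (FM : CodeTree M N → Measure X),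
      (∀ σ, IsProbabilityMeasure (FM σ)) ∧
      (∀ ε : ℝ, 0 < ε → ∃ k₀ : ℕ, ∀ k ≥ k₀, ∀ (σ : CodeTree M N) (K : Set X),
        K.Nonempty → IsCompact K →
        hausdorffDist (⋃ (i : List (Fin M)) (_ : i.length = k), treeComp f i σ '' K)
          (FS σ : Set X) < ε) ∧
      (∀ ε : ℝ, 0 < ε → ∃ k₀ : ℕ, ∀ k ≥ k₀, ∀ (σ : CodeTree M N) (ς : Measure X),
        IsProbabilityMeasure ς →
        MKdist (Measure.sum fun i : {i : List (Fin M) // i.length = k} =>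
            (treeProb p i.1 σ : ENNReal) • ς.map (treeComp f i.1 σ)) (FM σ) < ε) ∧
      Continuous FS ∧
      (∀ (σ : CodeTree M N) (ε : ℝ), 0 < ε → ∃ δ : ℝ, 0 < δ ∧
        ∀ σ' : CodeTree M N, dist σ' σ < δ → MKdist (FM σ') (FM σ) < ε) :=
  stmt_8_general f l hl hf p hp
end

section
/- Fix positive integers M, N, V, and let Ω_V be the set attractor of the IFS {Ω^V; η^a, a ∈ A}. Then a V-tuple ω ∈ Ω^V belongs to Ω_V if and only if ω is V-variable, i.e. for every level k the total number of distinct subtrees at level k occurring among all components of ω is at most V. Consequently, a single code tree σ ∈ Ω belongs to Ω_{V,1} if and only if for every level k the number of distinct subtrees of σ at level k is at most V. -/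
open Metric MeasureTheory Filter Set TopologicalSpace
/-- The index set `A = ({1,…,N} × {1,…,V}^M)^V`; `(a v).1` is the IFS number `n_v`
and `(a v).2 m` is the limb label `v_{v,m}`. -/
abbrev IdxA (M N V : ℕ) := Fin V → Fin N × (Fin M → Fin V)

/-- The shift `ξ_n : Ω^M → Ω`: bottom node labelled `n`, attached to the `M` given trees. -/
def xi {M N : ℕ} (n : Fin N) (ω : Fin M → CodeTree M N) : CodeTree M N :=
  fun i => match i with
  | [] => n
  | m :: j => ω m j

/-- The map `η^a : Ω^V → Ω^V`. -/
def eta {M N V : ℕ} (a : IdxA M N V) (ω : Fin V → CodeTree M N) : Fin V → CodeTree M N :=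
  fun v => xi (a v).1 fun m => ω ((a v).2 m)

/-- The subtree of a code tree at node `i`. -/
def subtreeAt {M N : ℕ} (τ : CodeTree M N) (i : List (Fin M)) : CodeTree M N :=
  fun j => τ (i ++ j)

section mainaux

open scoped Classical

variable {M N V : ℕ} [NeZero M]

lemma eval_eq_of_dist_lt {τ σ : CodeTree M N} {i : List (Fin M)}
    (h : dist τ σ < (1 / (M : ℝ)) ^ i.length) : τ i = σ i := by
  by_cases he : τ = σ
  · rw [he]
  by_contra hne
  have hle : Nat.find (codetree_exists_disagree he) ≤ i.length :=
    Nat.find_le ⟨i, rfl, hne⟩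
  have hMpos : (0 : ℝ) < M := by
    exact_mod_cast Nat.pos_of_ne_zero (NeZero.ne M)
  have h1 : (1 / (M : ℝ)) ≤ 1 := by
    rw [div_le_one hMpos]
    exact_mod_cast Nat.one_le_iff_ne_zero.mpr (NeZero.ne M)
  have hpow : (1 / (M : ℝ)) ^ i.length ≤ (1 / (M : ℝ)) ^ Nat.find (codetree_exists_disagree he) :=
    pow_le_pow_of_le_one (by positivity) h1 hle
  have hd : dist τ σ = (1 / (M : ℝ)) ^ Nat.find (codetree_exists_disagree he) := by
    show treeDist τ σ = _
    rw [treeDist, dif_neg he]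
  linarith

lemma isClosed_eval {v : Fin V} {i : List (Fin M)} {c : Fin N} :
    IsClosed {x : Fin V → CodeTree M N | x v i = c} := by
  rw [← isOpen_compl_iff, Metric.isOpen_iff]
  intro x hx
  have hMpos : (0 : ℝ) < M := by
    exact_mod_cast Nat.pos_of_ne_zero (NeZero.ne M)
  refine ⟨(1 / (M : ℝ)) ^ i.length, by positivity, fun y hy hyc => hx ?_⟩
  have hvd : dist (y v) (x v) < (1 / (M : ℝ)) ^ i.length :=
    lt_of_le_of_lt (dist_le_pi_dist y x v) hy
  show x v i = c
  rw [← eval_eq_of_dist_lt hvd]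
  exact hyc

lemma subtreeAt_nil (τ : CodeTree M N) : subtreeAt τ [] = τ := rfl

lemma subtreeAt_append (τ : CodeTree M N) (i j : List (Fin M)) :
    subtreeAt (subtreeAt τ i) j = subtreeAt τ (i ++ j) :=
  funext fun l => by simp [subtreeAt, List.append_assoc]

lemma subtreeAt_eta (a : IdxA M N V) (κ : Fin V → CodeTree M N) (v : Fin V) (m : Fin M)
    (j : List (Fin M)) :
    subtreeAt (eta a κ v) (m :: j) = subtreeAt (κ ((a v).2 m)) j := rfl

/-- The `V`-variability predicate. -/
def IsVar (ω : Fin V → CodeTree M N) : Prop :=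
  ∀ k : ℕ, ∃ s : Finset (CodeTree M N), s.card ≤ V ∧
    ∀ (v : Fin V) (i : List (Fin M)), i.length = k → subtreeAt (ω v) i ∈ s

/-- Every element of an invariant set has at most `V` distinct subtrees at each level:
they are all components of some element of the set. -/
lemma mem_subtree {ΩV : Set (Fin V → CodeTree M N)}
    (hinv : ΩV = ⋃ a : IdxA M N V, eta a '' ΩV) :
    ∀ k : ℕ, ∀ ω ∈ ΩV, ∃ x, x ∈ ΩV ∧
      ∀ (v : Fin V) (i : List (Fin M)), i.length = k → ∃ w, subtreeAt (ω v) i = x w := by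
  intro k
  induction k with
  | zero =>
    intro ω hω
    refine ⟨ω, hω, fun v i hi => ⟨v, ?_⟩⟩
    rw [List.eq_nil_of_length_eq_zero hi, subtreeAt_nil]
  | succ k ih =>
    intro ω hω
    rw [hinv] at hω
    obtain ⟨a, ⟨κ, hκ, rfl⟩⟩ := by
      simpa only [Set.mem_iUnion, Set.mem_image] using hω
    obtain ⟨x, hx, hxs⟩ := ih κ hκ
    refine ⟨x, hx, fun v i hi => ?_⟩
    match i, hi with
    | m :: j, hi =>
      rw [subtreeAt_eta]
      exact hxs ((a v).2 m) j (by simpa using hi)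

/-- A `V`-variable grove can be written as `eta a κ` with `κ` itself `V`-variable. -/
lemma decompose [NeZero V] {ω : Fin V → CodeTree M N} (hω : IsVar ω) :
    ∃ (a : IdxA M N V) (κ : Fin V → CodeTree M N), IsVar κ ∧ eta a κ = ω := by
  obtain ⟨s, hcard, hs⟩ := hω 1
  set s' : Finset (CodeTree M N) :=
    Finset.image (fun p : Fin V × Fin M => subtreeAt (ω p.1) [p.2]) Finset.univ with hs'def
  have hsub : s' ⊆ s := by
    intro t ht
    obtain ⟨p, -, rfl⟩ := Finset.mem_image.mp ht
    exact hs p.1 [p.2] rfl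
  have hcard' : s'.card ≤ V := le_trans (Finset.card_le_card hsub) hcard
  have hpos : 0 < s'.card :=
    Finset.card_pos.mpr ⟨subtreeAt (ω 0) [0],
      Finset.mem_image.mpr ⟨((0 : Fin V), (0 : Fin M)), Finset.mem_univ _, rfl⟩⟩
  set e := s'.equivFin with hedef
  set κ : Fin V → CodeTree M N := fun w =>
    if h : (w : ℕ) < s'.card then (e.symm ⟨(w : ℕ), h⟩ : CodeTree M N)
    else (e.symm ⟨0, hpos⟩ : CodeTree M N) with hκdef
  have hκmem : ∀ w, (κ w) ∈ s' := by
    intro w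
    by_cases h : (w : ℕ) < s'.card
    · simp only [hκdef, dif_pos h]; exact Finset.coe_mem _
    · simp only [hκdef, dif_neg h]; exact Finset.coe_mem _
  have hκ : ∀ (t : CodeTree M N) (ht : t ∈ s'), κ (Fin.castLE hcard' (e ⟨t, ht⟩)) = t := by
    intro t ht
    have hlt : ((Fin.castLE hcard' (e ⟨t, ht⟩) : Fin V) : ℕ) < s'.card := (e ⟨t, ht⟩).2
    simp only [hκdef, dif_pos hlt]
    have h2 : (⟨((Fin.castLE hcard' (e ⟨t, ht⟩) : Fin V) : ℕ), hlt⟩ : Fin s'.card)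
        = e ⟨t, ht⟩ := Fin.ext rfl
    rw [h2, Equiv.symm_apply_apply]
  have hmem1 : ∀ (v : Fin V) (m : Fin M), subtreeAt (ω v) [m] ∈ s' := fun v m =>
    Finset.mem_image.mpr ⟨(v, m), Finset.mem_univ _, rfl⟩
  refine ⟨fun v => (ω v [], fun m => Fin.castLE hcard' (e ⟨subtreeAt (ω v) [m], hmem1 v m⟩)),
    κ, ?_, ?_⟩
  · intro k
    obtain ⟨t, hct, ht⟩ := hω (k + 1)
    refine ⟨t, hct, fun w i hi => ?_⟩
    obtain ⟨p, -, hp⟩ := Finset.mem_image.mp (hκmem w)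
    rw [← hp, subtreeAt_append]
    exact ht p.1 ([p.2] ++ i) (by simpa using hi)
  · funext v i
    match i with
    | [] => rfl
    | m :: j =>
      show κ (Fin.castLE hcard' (e ⟨subtreeAt (ω v) [m], hmem1 v m⟩)) j = ω v (m :: j)
      rw [hκ _ (hmem1 v m)]
      rfl

/-- A `V`-variable grove belongs to the attractor. -/
lemma var_mem [NeZero V] {ΩV : Set (Fin V → CodeTree M N)}
    (hne : ΩV.Nonempty) (hcomp : IsCompact ΩV)
    (hinv : ΩV = ⋃ a : IdxA M N V, eta a '' ΩV)
    {ω : Fin V → CodeTree M N} (hω : IsVar ω) : ω ∈ ΩV := by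
  have heta : ∀ (a : IdxA M N V) (x : Fin V → CodeTree M N), x ∈ ΩV → eta a x ∈ ΩV := by
    intro a x hx
    rw [hinv]
    exact Set.mem_iUnion.mpr ⟨a, Set.mem_image_of_mem _ hx⟩
  -- approximation at every finite depth
  have happrox : ∀ k : ℕ, ∀ ω' : Fin V → CodeTree M N, IsVar ω' →
      ∃ x ∈ ΩV, ∀ (v : Fin V) (i : List (Fin M)), i.length < k → x v i = ω' v i := by
    intro k
    induction k with
    | zero =>
      intro ω' _
      obtain ⟨x, hx⟩ := hne
      exact ⟨x, hx, fun v i hi => absurd hi (Nat.not_lt_zero _)⟩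
    | succ k ih =>
      intro ω' hω'
      obtain ⟨a, κ, hκvar, hκeq⟩ := decompose hω'
      obtain ⟨y, hy, hys⟩ := ih κ hκvar
      refine ⟨eta a y, heta a y hy, fun v i hi => ?_⟩
      match i with
      | [] =>
        show (a v).1 = ω' v []
        rw [← hκeq]; rfl
      | m :: j =>
        show y ((a v).2 m) j = ω' v (m :: j)
        rw [← hκeq]
        show y ((a v).2 m) j = κ ((a v).2 m) j
        exact hys ((a v).2 m) j (by simpa using hi)
  set C : ℕ → Set (Fin V → CodeTree M N) := fun k =>
    ΩV ∩ {x | ∀ (v : Fin V) (i : List (Fin M)), i.length < k → x v i = ω v i} with hCdef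
  have hCcl : ∀ k, IsClosed (C k) := by
    intro k
    refine hcomp.isClosed.inter ?_
    have heq : {x : Fin V → CodeTree M N | ∀ (v : Fin V) (i : List (Fin M)),
        i.length < k → x v i = ω v i}
        = ⋂ (v : Fin V), ⋂ (i : List (Fin M)), ⋂ (_ : i.length < k), {x | x v i = ω v i} := by
      ext x; simp [Set.mem_iInter]
    rw [heq]
    exact isClosed_iInter fun v => isClosed_iInter fun i => isClosed_iInter fun _ => isClosed_eval
  have hCne : ∀ k, (C k).Nonempty := by
    intro k
    obtain ⟨x, hx, hxs⟩ := happrox k ω hω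
    exact ⟨x, hx, hxs⟩
  have hCsub : ∀ k, C (k + 1) ⊆ C k := fun k x hx =>
    ⟨hx.1, fun v i hi => hx.2 v i (Nat.lt_succ_of_lt hi)⟩
  have hC0 : IsCompact (C 0) := hcomp.of_isClosed_subset (hCcl 0) Set.inter_subset_left
  obtain ⟨x, hx⟩ :=
    IsCompact.nonempty_iInter_of_sequence_nonempty_isCompact_isClosed C hCsub hCne hC0 hCcl
  have hxeq : x = ω := by
    funext v i
    exact (Set.mem_iInter.mp hx (i.length + 1)).2 v i (Nat.lt_succ_self _)
  rw [← hxeq]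
  exact (Set.mem_iInter.mp hx 0).1

end mainaux

/-- **Characterization of `Ω_V` by `V`-variability.** Let `Ω_V` be the set attractor of
the IFS `{Ω^V; η^a, a ∈ A}`.  A grove `ω ∈ Ω^V` belongs to `Ω_V` iff at every level `k`
the components of `ω` have at most `V` distinct subtrees altogether; and a code tree
`σ ∈ Ω` is a `V`-tree (i.e. lies in `Ω_{V,1}`) iff it has at most `V` distinct subtrees
at every level. -/
theorem stmt_10 {M N V : ℕ} [NeZero M] [NeZero V] (hN : 0 < N)
    (ΩV : Set (Fin V → CodeTree M N))
    (hne : ΩV.Nonempty) (hcomp : IsCompact ΩV)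
    (hinv : ΩV = ⋃ a : IdxA M N V, eta a '' ΩV)
    (huniq : ∀ S : Set (Fin V → CodeTree M N), S.Nonempty → IsCompact S →
      S = ⋃ a : IdxA M N V, eta a '' S → S = ΩV) :
    (∀ ω : Fin V → CodeTree M N, ω ∈ ΩV ↔
      ∀ k : ℕ, ∃ s : Finset (CodeTree M N), s.card ≤ V ∧
        ∀ (v : Fin V) (i : List (Fin M)), i.length = k → subtreeAt (ω v) i ∈ s) ∧
    (∀ σ : CodeTree M N, (∃ ω ∈ ΩV, ω 0 = σ) ↔
      ∀ k : ℕ, ∃ s : Finset (CodeTree M N), s.card ≤ V ∧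
        ∀ i : List (Fin M), i.length = k → subtreeAt σ i ∈ s) := by
  classical
  have part1 : ∀ ω : Fin V → CodeTree M N, ω ∈ ΩV ↔
      ∀ k : ℕ, ∃ s : Finset (CodeTree M N), s.card ≤ V ∧
        ∀ (v : Fin V) (i : List (Fin M)), i.length = k → subtreeAt (ω v) i ∈ s := by
    intro ω
    constructor
    · intro hω k
      obtain ⟨x, -, hxs⟩ := mem_subtree hinv k ω hω
      refine ⟨Finset.image x Finset.univ, le_trans Finset.card_image_le (by simp), ?_⟩
      intro v i hi
      obtain ⟨w, hw⟩ := hxs v i hi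
      rw [hw]
      exact Finset.mem_image_of_mem _ (Finset.mem_univ _)
    · intro hω
      exact var_mem hne hcomp hinv hω
  refine ⟨part1, fun σ => ⟨?_, ?_⟩⟩
  · rintro ⟨ω, hω, rfl⟩ k
    obtain ⟨s, hc, hs⟩ := (part1 ω).mp hω k
    exact ⟨s, hc, fun i hi => hs 0 i hi⟩
  · intro h
    refine ⟨fun _ => σ, ?_, rfl⟩
    apply (part1 _).mpr
    intro k
    obtain ⟨s, hc, hs⟩ := h k
    exact ⟨s, hc, fun v i hi => hs i hi⟩
end

section
/- Fix positive integers M, N, V, and let Ω_V be the set attractor of the IFS {Ω^V; η^a, a ∈ A}. Then for every permutation Ξ of the coordinates of Ω^V one has Ξ(Ω_V) = Ω_V; consequently Ω_{V,v} = Ω_{V,1} for every v ∈ {1, ..., V}. -/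
open Metric MeasureTheory Filter Set TopologicalSpace
/-- The action of a coordinate permutation on the index set `A`. -/
def permA {M N V : ℕ} (Ξ : Equiv.Perm (Fin V)) (a : IdxA M N V) : IdxA M N V :=
  fun u => ((a (Ξ.symm u)).1, fun m => Ξ ((a (Ξ.symm u)).2 m))

lemma eta_permA {M N V : ℕ} (Ξ : Equiv.Perm (Fin V)) (a : IdxA M N V)
    (ω : Fin V → CodeTree M N) :
    (eta (permA Ξ a) ω) ∘ Ξ = eta a (ω ∘ Ξ) := by
  funext v
  simp [eta, permA, Function.comp]

lemma permA_surjective {M N V : ℕ} (Ξ : Equiv.Perm (Fin V)) :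
    Function.Surjective (permA (M := M) (N := N) Ξ) := by
  intro b
  refine ⟨permA Ξ.symm b, ?_⟩
  funext u
  simp [permA]

/-- **Permutation invariance of `Ω_V`.** Let `Ω_V` be the set attractor of the IFS
`{Ω^V; η^a, a ∈ A}`.  Then every permutation of coordinates maps `Ω_V` onto itself, and
consequently the set `Ω_{V,v}` of `v`-th components of elements of `Ω_V` is the same for
every `v`. -/
theorem stmt_11 {M N V : ℕ} [NeZero M] [NeZero V] (hN : 0 < N)
    (ΩV : Set (Fin V → CodeTree M N))
    (hne : ΩV.Nonempty) (hcomp : IsCompact ΩV)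
    (hinv : ΩV = ⋃ a : IdxA M N V, eta a '' ΩV)
    (huniq : ∀ S : Set (Fin V → CodeTree M N), S.Nonempty → IsCompact S →
      S = ⋃ a : IdxA M N V, eta a '' S → S = ΩV) :
    (∀ Ξ : Equiv.Perm (Fin V), (fun ω : Fin V → CodeTree M N => ω ∘ Ξ) '' ΩV = ΩV) ∧
    (∀ v : Fin V, {σ : CodeTree M N | ∃ ω ∈ ΩV, ω v = σ} =
      {σ : CodeTree M N | ∃ ω ∈ ΩV, ω 0 = σ}) := by
  have key : ∀ Ξ : Equiv.Perm (Fin V), (fun ω : Fin V → CodeTree M N => ω ∘ Ξ) '' ΩV = ΩV := by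
    intro Ξ
    apply huniq
    · exact hne.image _
    · exact hcomp.image (continuous_pi fun v => continuous_apply (Ξ v))
    · conv_lhs => rw [hinv]
      rw [image_iUnion]
      ext x
      simp only [mem_iUnion]
      constructor
      · rintro ⟨a, ha⟩
        obtain ⟨b, rfl⟩ := permA_surjective Ξ a
        refine ⟨b, ?_⟩
        rw [← image_comp] at ha ⊢
        have : (fun ω : Fin V → CodeTree M N => ω ∘ Ξ) ∘ eta (permA Ξ b)
            = eta b ∘ (fun ω : Fin V → CodeTree M N => ω ∘ Ξ) := by
          funext ω; exact eta_permA Ξ b ω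
        rwa [this] at ha
      · rintro ⟨b, hb⟩
        refine ⟨permA Ξ b, ?_⟩
        rw [← image_comp] at hb ⊢
        have : (fun ω : Fin V → CodeTree M N => ω ∘ Ξ) ∘ eta (permA Ξ b)
            = eta b ∘ (fun ω : Fin V → CodeTree M N => ω ∘ Ξ) := by
          funext ω; exact eta_permA Ξ b ω
        rwa [this]
  refine ⟨key, fun v => ?_⟩
  ext σ
  simp only [mem_setOf_eq]
  constructor
  · rintro ⟨ω, hω, rfl⟩
    refine ⟨ω ∘ Equiv.swap v 0, ?_, ?_⟩
    · rw [← key (Equiv.swap v 0)]; exact mem_image_of_mem _ hω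
    · simp [Equiv.swap_apply_right]
  · rintro ⟨ω, hω, rfl⟩
    refine ⟨ω ∘ Equiv.swap v 0, ?_, ?_⟩
    · rw [← key (Equiv.swap v 0)]; exact mem_image_of_mem _ hω
    · simp [Equiv.swap_apply_left]
end

section
/- Fix positive integers M, N, V, and let Ω_{V,1} ⊆ Ω be the set of V-trees (the set of first components of elements of the set attractor Ω_V of the IFS {Ω^V; η^a, a ∈ A}). Then the Hausdorff distance in (Ω, d_Ω) between Ω_{V,1} and Ω satisfies d_{H(Ω)}(Ω_{V,1}, Ω) < 1/V. In particular Ω_{V,1} → Ω in the Hausdorff metric as V → ∞. -/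
/-!
Since `Ω_V` is closed under every `η^a`, a tuple in `Ω_V` can be grown one level at a time: to
copy a tree `σ` down to depth `r`, the `V` components must carry the subtrees of `σ` rooted at
all `M ^ d` nodes of each depth `d ≤ r`, which is possible as long as `M ^ r ≤ V`. With
`k = ⌊log_M V⌋`, every code tree therefore agrees with a `V`-tree down to depth `k`, so it lies
within `M ^ -(k+1) < 1 / V` of `Ω_{V,1}`. For `M = 1` the metric is discrete and copying works
to every depth; compactness of `Ω_V` (Cantor's intersection theorem) then gives `Ω_{V,1} = Ω`.
-/

open Metric MeasureTheory Filter Set TopologicalSpace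
namespace CodeTree

variable {M N : ℕ} [NeZero M]

theorem dist_le_of_forall_length_lt {x y : CodeTree M N} {k : ℕ}
    (h : ∀ i : List (Fin M), i.length < k → x i = y i) : dist x y ≤ (M : ℝ)⁻¹ ^ k := by
  change treeDist x y ≤ _
  by_cases hxy : x = y
  · subst hxy
    simp [treeDist]
  · rw [treeDist, dif_neg hxy, one_div]
    refine pow_le_pow_of_le_one (by positivity)
      (inv_le_one_of_one_le₀ (by exact_mod_cast NeZero.one_le)) ?_
    classical
    exact (Nat.le_find_iff _ _).2 fun m hm ⟨i, hi, hne⟩ => hne (h i (hi ▸ hm))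

theorem dist_eq_one_of_ne {x y : CodeTree 1 N} (h : x ≠ y) : dist x y = 1 := by
  change treeDist x y = 1
  simp [treeDist, dif_neg h]

instance : DiscreteTopology (CodeTree 1 N) :=
  DiscreteTopology.of_forall_le_dist one_pos fun _ _ h => (dist_eq_one_of_ne h).ge

end CodeTree

theorem exists_range_eq_setOf_length_eq {M V L : ℕ} [NeZero M] (hV : M ^ L ≤ V) :
    ∃ p : Fin V → List (Fin M), range p = {j | j.length = L} := by
  have hcard : Fintype.card (List.Vector (Fin M) L) ≤ Fintype.card (Fin V) := by simpa using hV
  obtain ⟨e⟩ := Function.Embedding.nonempty_of_card_le hcard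
  have : Nonempty (List.Vector (Fin M) L) := ⟨List.Vector.replicate L 0⟩
  refine ⟨fun v => (Function.invFun e v).toList, Set.ext fun j => ⟨?_, fun hj => ?_⟩⟩
  · rintro ⟨v, rfl⟩
    exact List.Vector.toList_length _
  · obtain ⟨v, hv⟩ := Function.invFun_surjective e.injective ⟨j, hj⟩
    exact ⟨v, congrArg List.Vector.toList hv⟩

section Attractor

variable {M N V : ℕ} {S : Set (Fin V → CodeTree M N)}

theorem exists_mem_forall_length_le_eq_append [NeZero M]
    (hS : ∀ a : IdxA M N V, ∀ ω ∈ S, eta a ω ∈ S) (hne : S.Nonempty) (σ : CodeTree M N)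
    (r : ℕ) : ∀ {L : ℕ} {p : Fin V → List (Fin M)}, M ^ (L + r) ≤ V →
      range p = {j | j.length = L} → ∃ ω ∈ S, ∀ v i, i.length ≤ r → ω v i = σ (p v ++ i) := by
  induction r with
  | zero =>
    intro L p _ _
    obtain ⟨ω, hω⟩ := hne
    refine ⟨eta (fun v => (σ (p v), fun _ => v)) ω, hS _ _ hω, fun v i hi => ?_⟩
    rw [List.length_eq_zero_iff.mp (Nat.le_zero.mp hi)]
    simp [eta, xi]
  | succ r ih =>
    intro L p hV hp
    obtain ⟨p', hp'⟩ := exists_range_eq_setOf_length_eq (M := M) (V := V) (L := L + 1)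
      ((Nat.pow_le_pow_right (NeZero.pos M) (by omega)).trans hV)
    obtain ⟨ω, hω, hagree⟩ := ih (by rwa [add_right_comm, add_assoc]) hp'
    have hchild : ∀ v (m : Fin M), ∃ w, p' w = p v ++ [m] := fun v m => by
      have hlen : (p v).length = L := (hp ▸ mem_range_self v : p v ∈ {j | j.length = L})
      change p v ++ [m] ∈ range p'
      simp [hp', hlen]
    choose c hc using hchild
    refine ⟨eta (fun v => (σ (p v), c v)) ω, hS _ _ hω, fun v i hi => ?_⟩
    cases i with
    | nil => simp [eta, xi]
    | cons m j =>
      change ω (c v m) j = σ (p v ++ m :: j)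
      rw [hagree _ _ (by simpa using hi), hc]
      simp

theorem exists_mem_forall_length_le_eq [NeZero M] [NeZero V]
    (hS : ∀ a : IdxA M N V, ∀ ω ∈ S, eta a ω ∈ S) (hne : S.Nonempty) (σ : CodeTree M N)
    {r : ℕ} (hV : M ^ r ≤ V) : ∃ ω ∈ S, ∀ i : List (Fin M), i.length ≤ r → ω 0 i = σ i := by
  have hp : range (fun _ : Fin V => ([] : List (Fin M))) = {j | j.length = 0} := by
    ext j
    simp
  obtain ⟨ω, hω, h⟩ := exists_mem_forall_length_le_eq_append hS hne σ r (by simpa) hp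
  exact ⟨ω, hω, fun i hi => h 0 i hi⟩

theorem hausdorffDist_image_eval_zero_univ_lt [NeZero M] [NeZero V] (hM : 1 < M)
    (hS : ∀ a : IdxA M N V, ∀ ω ∈ S, eta a ω ∈ S) (hne : S.Nonempty) :
    hausdorffDist ((fun ω => ω 0) '' S) univ < 1 / (V : ℝ) := by
  set k := Nat.log M V
  have hle : M ^ k ≤ V := Nat.pow_log_le_self M (NeZero.ne V)
  have hlt : V < M ^ (k + 1) := Nat.lt_pow_succ_log_self hM V
  calc hausdorffDist ((fun ω => ω 0) '' S) univ ≤ (M : ℝ)⁻¹ ^ (k + 1) := by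
        refine hausdorffDist_le_of_mem_dist (by positivity)
          (fun x _ => ⟨x, mem_univ x, by simp⟩) fun σ _ => ?_
        obtain ⟨ω, hω, h⟩ := exists_mem_forall_length_le_eq hS hne σ hle
        exact ⟨ω 0, mem_image_of_mem _ hω, CodeTree.dist_le_of_forall_length_lt
          fun i hi => (h i (Nat.lt_succ_iff.mp hi)).symm⟩
    _ < 1 / (V : ℝ) := by
        rw [inv_pow, ← one_div]
        exact one_div_lt_one_div_of_lt (Nat.cast_pos.mpr (NeZero.pos V)) (by exact_mod_cast hlt)

theorem image_eval_zero_eq_univ_of_isCompact [NeZero V] {S : Set (Fin V → CodeTree 1 N)}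
    (hcomp : IsCompact S) (hS : ∀ a : IdxA 1 N V, ∀ ω ∈ S, eta a ω ∈ S) (hne : S.Nonempty) :
    (fun ω => ω 0) '' S = univ := by
  refine eq_univ_of_forall fun σ => ?_
  let t : ℕ → Set (Fin V → CodeTree 1 N) :=
    fun r => {ω ∈ S | ∀ i : List (Fin 1), i.length ≤ r → ω 0 i = σ i}
  obtain ⟨ω, hω⟩ := IsCompact.nonempty_iInter_of_sequence_nonempty_isCompact_isClosed t
    (fun r ω hω => ⟨hω.1, fun i hi => hω.2 i (by omega)⟩)
    (fun r => exists_mem_forall_length_le_eq hS hne σ (by simpa using NeZero.one_le))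
    (hcomp.of_isClosed_subset (isClosed_discrete _) (sep_subset _ _))
    (fun _ => isClosed_discrete _)
  have hωt : ∀ r, ω ∈ t r := mem_iInter.mp hω
  exact ⟨ω, (hωt 0).1, funext fun i => (hωt i.length).2 i le_rfl⟩

end Attractor

theorem stmt_12_general {M N V : ℕ} [NeZero M] [NeZero V]
    (ΩV : Set (Fin V → CodeTree M N))
    (hne : ΩV.Nonempty) (hcomp : IsCompact ΩV)
    (hinv : ΩV = ⋃ a : IdxA M N V, eta a '' ΩV) :
    hausdorffDist {σ : CodeTree M N | ∃ ω ∈ ΩV, ω 0 = σ}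
      (Set.univ : Set (CodeTree M N)) < 1 / (V : ℝ) := by
  have hS : ∀ a : IdxA M N V, ∀ ω ∈ ΩV, eta a ω ∈ ΩV := fun a ω hω => by
    rw [hinv]
    exact mem_iUnion.mpr ⟨a, mem_image_of_mem _ hω⟩
  change hausdorffDist ((fun ω => ω 0) '' ΩV) univ < _
  obtain hM | hM := (NeZero.one_le : 1 ≤ M).eq_or_lt
  · subst hM
    rw [image_eval_zero_eq_univ_of_isCompact hcomp hS hne, hausdorffDist_self_zero]
    exact one_div_pos.mpr (Nat.cast_pos.mpr (NeZero.pos V))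
  · exact hausdorffDist_image_eval_zero_univ_lt hM hS hne

/-- **`V`-trees approximate all code trees.** Let `Ω_{V,1}` be the set of `V`-trees, the
set of first components of the set attractor `Ω_V` of the IFS `{Ω^V; η^a, a ∈ A}`.  Then
the Hausdorff distance between `Ω_{V,1}` and `Ω` in `(Ω, d_Ω)` is less than `1/V`. -/
theorem stmt_12 {M N V : ℕ} [NeZero M] [NeZero V] (hN : 0 < N)
    (ΩV : Set (Fin V → CodeTree M N))
    (hne : ΩV.Nonempty) (hcomp : IsCompact ΩV)
    (hinv : ΩV = ⋃ a : IdxA M N V, eta a '' ΩV)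
    (huniq : ∀ S : Set (Fin V → CodeTree M N), S.Nonempty → IsCompact S →
      S = ⋃ a : IdxA M N V, eta a '' S → S = ΩV) :
    hausdorffDist {σ : CodeTree M N | ∃ ω ∈ ΩV, ω 0 = σ}
      (Set.univ : Set (CodeTree M N)) < 1 / (V : ℝ) :=
  stmt_12_general ΩV hne hcomp hinv
end
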